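/- arXiv:1309.2020 — 3 statements merged into one kernel-verified Lean document; each statement's English description precedes it below -/
import Mathlib

section
/- Define f_n ∈ c* = ℓ¹ by f_n = e_{2n} − e_{2n+1} (coordinate functionals on the space c of convergent sequences). Then (f_n) is a disjoint weak*-null sequence in c*, but (|f_n|) does not converge to zero in the weak* topology; in fact |f_n|(𝟏) = 2 for all n, where 𝟏 is the constant-one sequence. -/
open Filter Topology

section Defs

variable {E : Type*} [NormedAddCommGroup E] [Lattice E] [HasSolidNorm E] [IsOrderedAddMonoid E] [NormedSpace ℝ E]

/-- The value of the modulus `|f|` of a functional at a positive element `x`: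
`|f|(x) = sup { f y : |y| ≤ x }`. -/
noncomputable def absVal (f : E →L[ℝ] ℝ) (x : E) : ℝ :=
  sSup ((fun y => f y) '' {y | |y| ≤ x})

/-- The value of the positive part `f⁺` of a functional at a positive element `x`:
`f⁺(x) = sup { f y : 0 ≤ y ≤ x }`. -/
noncomputable def posVal (f : E →L[ℝ] ℝ) (x : E) : ℝ :=
  sSup ((fun y => f y) '' {y | 0 ≤ y ∧ y ≤ x})

/-- The value of `|f|` at an arbitrary `x`, via `x = x⁺ - x⁻`. -/
noncomputable def absValF (f : E →L[ℝ] ℝ) (x : E) : ℝ :=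
  absVal f (x ⊔ 0) - absVal f (-x ⊔ 0)

/-- The value of `f⁺` at an arbitrary `x`, via `x = x⁺ - x⁻`. -/
noncomputable def posValF (f : E →L[ℝ] ℝ) (x : E) : ℝ :=
  posVal f (x ⊔ 0) - posVal f (-x ⊔ 0)

/-- The value of `f⁻ = (-f)⁺` at an arbitrary `x`. -/
noncomputable def negValF (f : E →L[ℝ] ℝ) (x : E) : ℝ :=
  posValF (-f) x

/-- `f ≤ g` in the dual order: `f x ≤ g x` for all `x ≥ 0`. -/
def FunLe (f g : E →L[ℝ] ℝ) : Prop := ∀ x : E, 0 ≤ x → f x ≤ g x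

/-- `|f| ≤ |g|` in the dual order. -/
def FunAbsLe (f g : E →L[ℝ] ℝ) : Prop := ∀ x : E, 0 ≤ x → absVal f x ≤ absVal g x

/-- Disjointness of two functionals: `(|f| ∧ |g|)(x) = 0` for all `x ≥ 0`, where
`(|f| ∧ |g|)(x) = inf { |f|(y) + |g|(x - y) : 0 ≤ y ≤ x }` (Riesz–Kantorovich). -/
def FunDisjoint (f g : E →L[ℝ] ℝ) : Prop :=
  ∀ x : E, 0 ≤ x →
    sInf ((fun y => absVal f y + absVal g (x - y)) '' {y | 0 ≤ y ∧ y ≤ x}) = 0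

/-- A sequence of functionals is weak*-null. -/
def WeakStarNull (f : ℕ → E →L[ℝ] ℝ) : Prop :=
  ∀ x : E, Tendsto (fun n => f n x) atTop (𝓝 0)

/-- A sequence in `E` is weakly null. -/
def WeaklyNull (x : ℕ → E) : Prop :=
  ∀ f : E →L[ℝ] ℝ, Tendsto (fun n => f (x n)) atTop (𝓝 0)

/-- A sequence of functionals is weakly null (i.e. null for `σ(E*, E**)`). -/
def WeaklyNullDual (f : ℕ → E →L[ℝ] ℝ) : Prop :=
  ∀ Φ : (E →L[ℝ] ℝ) →L[ℝ] ℝ, Tendsto (fun n => Φ (f n)) atTop (𝓝 0)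

/-- Disjointness of two elements of a Banach lattice. -/
def ElemDisjoint (x y : E) : Prop := |x| ⊓ |y| = 0

/-- A set is almost limited: it is norm bounded and every disjoint weak*-null sequence of
functionals converges uniformly to zero on it. -/
def AlmostLimited (A : Set E) : Prop :=
  Bornology.IsBounded A ∧
    ∀ f : ℕ → E →L[ℝ] ℝ, Pairwise (fun m n => FunDisjoint (f m) (f n)) → WeakStarNull f →
      ∀ ε > 0, ∀ᶠ n in atTop, ∀ x ∈ A, |f n x| < ε

/-- A set is limited: it is norm bounded and every weak*-null sequence of functionals
converges uniformly to zero on it. -/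
def LimitedSet (A : Set E) : Prop :=
  Bornology.IsBounded A ∧
    ∀ f : ℕ → E →L[ℝ] ℝ, WeakStarNull f →
      ∀ ε > 0, ∀ᶠ n in atTop, ∀ x ∈ A, |f n x| < ε

/-- A set is almost Dunford–Pettis: it is norm bounded and every disjoint weakly null
sequence of functionals converges uniformly to zero on it. -/
def AlmostDPSet (A : Set E) : Prop :=
  Bornology.IsBounded A ∧
    ∀ f : ℕ → E →L[ℝ] ℝ, Pairwise (fun m n => FunDisjoint (f m) (f n)) → WeaklyNullDual f →
      ∀ ε > 0, ∀ᶠ n in atTop, ∀ x ∈ A, |f n x| < ε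

/-- The solid hull of a set. -/
def SolidHull (A : Set E) : Set E := {y | ∃ x ∈ A, |y| ≤ |x|}

/-- A set is L-weakly compact: norm bounded, and every disjoint sequence in its solid hull
is norm null. -/
def LWeaklyCompact (A : Set E) : Prop :=
  Bornology.IsBounded A ∧
    ∀ x : ℕ → E, (∀ n, x n ∈ SolidHull A) → Pairwise (fun m n => ElemDisjoint (x m) (x n)) →
      Tendsto (fun n => ‖x n‖) atTop (𝓝 0)

/-- A set `B ⊆ E*` is an almost L-set: norm bounded, and every disjoint weakly null sequence
of `E` converges uniformly to zero on `B`. -/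
def AlmostLSet (B : Set (E →L[ℝ] ℝ)) : Prop :=
  Bornology.IsBounded B ∧
    ∀ x : ℕ → E, Pairwise (fun m n => ElemDisjoint (x m) (x n)) → WeaklyNull x →
      ∀ ε > 0, ∀ᶠ n in atTop, ∀ f ∈ B, |f (x n)| < ε

/-- The solid hull of a set of functionals, using the dual order. -/
def DualSolidHull (B : Set (E →L[ℝ] ℝ)) : Set (E →L[ℝ] ℝ) :=
  {g | ∃ f ∈ B, FunAbsLe g f}

/-- A set `B ⊆ E*` is L-weakly compact: norm bounded, and every disjoint sequence in its
solid hull is norm null. -/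
def DualLWeaklyCompact (B : Set (E →L[ℝ] ℝ)) : Prop :=
  Bornology.IsBounded B ∧
    ∀ g : ℕ → E →L[ℝ] ℝ, (∀ n, g n ∈ DualSolidHull B) →
      Pairwise (fun m n => FunDisjoint (g m) (g n)) →
        Tendsto (fun n => ‖g n‖) atTop (𝓝 0)

end Defs

/-- A Banach lattice is σ-Dedekind complete: every (countable) sequence bounded above has a
supremum. -/
def SigmaDedekindComplete (E : Type*) [NormedAddCommGroup E] [Lattice E] [HasSolidNorm E] [IsOrderedAddMonoid E] : Prop :=
  ∀ s : ℕ → E, (∃ b, ∀ n, s n ≤ b) → ∃ a, IsLUB (Set.range s) a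

/-- The norm of `E` is order continuous: if a downward directed set has infimum `0`, then it
contains elements of arbitrarily small norm. -/
def OrderContinuousNorm (E : Type*) [NormedAddCommGroup E] [Lattice E] [HasSolidNorm E] [IsOrderedAddMonoid E] : Prop :=
  ∀ A : Set E, A.Nonempty → DirectedOn (· ≥ ·) A → IsGLB A 0 →
    ∀ ε > 0, ∃ a ∈ A, ‖a‖ < ε

/-- The norm of `E*` is order continuous (with the dual order spelled out): if a nonempty
family of functionals is downward directed, consists of positive functionals, and `0` is its
greatest lower bound, then it contains functionals of arbitrarily small norm. -/
def DualOrderContinuousNorm (E : Type*) [NormedAddCommGroup E] [Lattice E] [HasSolidNorm E] [IsOrderedAddMonoid E] [NormedSpace ℝ E] :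
    Prop :=
  ∀ A : Set (E →L[ℝ] ℝ), A.Nonempty →
    (∀ f ∈ A, ∀ g ∈ A, ∃ h ∈ A, FunLe h f ∧ FunLe h g) →
    (∀ f ∈ A, FunLe 0 f) →
    (∀ g, (∀ f ∈ A, FunLe g f) → FunLe g 0) →
    ∀ ε > 0, ∃ f ∈ A, ‖f‖ < ε

/-- `E` has the weak Dunford–Pettis* property: `f n (x n) → 0` for every weakly null
sequence `(x n)` in `E` and every disjoint weak*-null sequence `(f n)` in `E*`. -/
def WDPStar (E : Type*) [NormedAddCommGroup E] [Lattice E] [HasSolidNorm E] [IsOrderedAddMonoid E] [NormedSpace ℝ E] : Prop :=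
  ∀ (x : ℕ → E) (f : ℕ → E →L[ℝ] ℝ), WeaklyNull x →
    Pairwise (fun m n => FunDisjoint (f m) (f n)) → WeakStarNull f →
      Tendsto (fun n => f n (x n)) atTop (𝓝 0)

/-- `E` has the positive Schur property: every weakly null sequence of positive elements is
norm null. -/
def PositiveSchur (E : Type*) [NormedAddCommGroup E] [Lattice E] [HasSolidNorm E] [IsOrderedAddMonoid E] [NormedSpace ℝ E] : Prop :=
  ∀ x : ℕ → E, (∀ n, 0 ≤ x n) → WeaklyNull x → Tendsto (fun n => ‖x n‖) atTop (𝓝 0)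

/-- A set is relatively weakly compact if the weak closure of its image in the weak space is
compact. -/
def RelWeaklyCompact {E : Type*} [NormedAddCommGroup E] [Lattice E] [HasSolidNorm E] [IsOrderedAddMonoid E] [NormedSpace ℝ E]
    (W : Set E) : Prop :=
  IsCompact (closure ((toWeakSpace ℝ E) '' W))

/- `dipole n` is supported on `{2n, 2n+1}`, so two dipoles have disjoint supports, `dipole n`
pairs a sequence with `x (2n) - x (2n+1)`, which tends to `l - l = 0` for convergent `x`, while
`|dipole n|` pairs it with `x (2n) + x (2n+1)`, which is `2` for the constant sequence `1`. -/

theorem tsum_eq_add_of_support_subset_pair {α M : Type*} [AddCommMonoid M] [TopologicalSpace M]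
    [T2Space M] {g : α → M} {a b : α} (hab : a ≠ b) (h : ∀ k, k ≠ a → k ≠ b → g k = 0) :
    ∑' k, g k = g a + g b := by
  classical
  rw [tsum_eq_sum (s := {a, b}) fun k hk => by
    simp only [Finset.mem_insert, Finset.mem_singleton, not_or] at hk
    exact h k hk.1 hk.2]
  exact Finset.sum_pair hab

theorem Filter.Tendsto.sub_comp_two_mul_add_one {x : ℕ → ℝ} {l : ℝ}
    (hx : Tendsto x atTop (𝓝 l)) :
    Tendsto (fun n => x (2 * n) - x (2 * n + 1)) atTop (𝓝 0) := by
  have h_even : Tendsto (fun n => x (2 * n)) atTop (𝓝 l) :=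
    hx.comp (strictMono_mul_left_of_pos (two_pos : (0 : ℕ) < 2)).tendsto_atTop
  have h_odd : Tendsto (fun n => x (2 * n + 1)) atTop (𝓝 l) :=
    hx.comp ((strictMono_mul_left_of_pos (two_pos : (0 : ℕ) < 2)).add_const 1).tendsto_atTop
  simpa using h_even.sub h_odd

/-- The functional `e (2n) - e (2n+1)` on `c`, as an element of `ℓ¹`. -/
def dipole (n k : ℕ) : ℝ :=
  if k = 2 * n then 1 else if k = 2 * n + 1 then -1 else 0

theorem dipole_eq_zero_of_ne {n k : ℕ} (h₀ : k ≠ 2 * n) (h₁ : k ≠ 2 * n + 1) :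
    dipole n k = 0 := by
  simp [dipole, h₀, h₁]

theorem div_two_eq_of_dipole_ne_zero {n k : ℕ} (h : dipole n k ≠ 0) : k / 2 = n := by
  by_contra hne
  exact h (dipole_eq_zero_of_ne (by omega) (by omega))

theorem min_abs_dipole_eq_zero {m n : ℕ} (hmn : m ≠ n) (k : ℕ) :
    min |dipole m k| |dipole n k| = 0 := by
  by_cases hm : dipole m k = 0
  · simp [hm]
  · have hn : dipole n k = 0 := by
      by_contra hn
      exact hmn ((div_two_eq_of_dipole_ne_zero hm).symm.trans (div_two_eq_of_dipole_ne_zero hn))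
    simp [hn]

theorem tsum_dipole_mul (n : ℕ) (x : ℕ → ℝ) :
    ∑' k, dipole n k * x k = x (2 * n) - x (2 * n + 1) := by
  rw [tsum_eq_add_of_support_subset_pair (a := 2 * n) (b := 2 * n + 1) (by omega)
    fun k h₀ h₁ => by
      rw [dipole_eq_zero_of_ne h₀ h₁, zero_mul]]
  simp [dipole, sub_eq_add_neg]

theorem tsum_abs_dipole_mul (n : ℕ) (x : ℕ → ℝ) :
    ∑' k, |dipole n k| * x k = x (2 * n) + x (2 * n + 1) := by
  rw [tsum_eq_add_of_support_subset_pair (a := 2 * n) (b := 2 * n + 1) (by omega)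
    fun k h₀ h₁ => by
      rw [dipole_eq_zero_of_ne h₀ h₁, abs_zero, zero_mul]]
  simp [dipole]

/-- The functionals `f n = e (2n) - e (2n+1)` on the space `c` of convergent
sequences (as elements of `c* = ℓ¹`, acting by `x ↦ ∑ k, f n k * x k`) form a disjoint
weak*-null sequence, with `|f n|(𝟏) = 2` for all `n`, and `(|f n|)` is not weak*-null. -/
theorem stmt3 (f : ℕ → ℕ → ℝ)
    (hf : ∀ n k, f n k = if k = 2 * n then (1 : ℝ) else if k = 2 * n + 1 then -1 else 0) :
    (Pairwise fun m n => ∀ k, min |f m k| |f n k| = 0) ∧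
    (∀ x : ℕ → ℝ, (∃ l, Tendsto x atTop (𝓝 l)) →
      Tendsto (fun n => ∑' k, f n k * x k) atTop (𝓝 0)) ∧
    (∀ n, ∑' k, |f n k| * (1 : ℝ) = 2) ∧
    ¬ (∀ x : ℕ → ℝ, (∃ l, Tendsto x atTop (𝓝 l)) →
      Tendsto (fun n => ∑' k, |f n k| * x k) atTop (𝓝 0)) := by
  obtain rfl : f = dipole := funext fun n => funext (hf n)
  have abs_one : ∀ n, ∑' k, |dipole n k| * (1 : ℝ) = 2 := fun n => by
    rw [tsum_abs_dipole_mul n fun _ => 1]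
    norm_num
  refine ⟨fun m n hmn => min_abs_dipole_eq_zero hmn, ?_, abs_one, fun h => ?_⟩
  · rintro x ⟨l, hx⟩
    simpa only [tsum_dipole_mul] using hx.sub_comp_two_mul_add_one
  · have h_two := h (fun _ => 1) ⟨1, tendsto_const_nhds⟩
    simp only [abs_one] at h_two
    norm_num at h_two
end

section
/- Every L-weakly compact subset of a Banach lattice E is an almost limited set. -/
open Filter Topology

/-!
Let `(fₙ)` be disjoint and weak*-null; by Banach–Steinhaus `‖fₙ‖ ≤ M`. An L-weakly compact set
`A` is almost order bounded (Meyer-Nieberg): for each `ε > 0` there is `u ≥ 0` with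
`‖(|a| - u)⁺‖ ≤ ε` on `A` such that `[0, u]` is again L-weakly compact. Then
`|fₙ a| ≤ |fₙ|(u) + M ε`, and `|fₙ|(u) → 0` for any bounded disjoint sequence. Otherwise
`|fₖ|(u) ≥ δ` along a subsequence. The Riesz–Kantorovich formula for `|fₖ| ∧ |fₗ| = 0` cuts `u`
into pieces on which `|fₖ|` keeps its mass and `|fₗ|` has almost none. Infima of countably many
pieces exist as norm limits, since monotone sequences in `[0, u]` converge, and they give
disjoint elements of `[0, u]` with `|fₖ|(zₖ) ≥ δ / 2`, which cannot be norm null.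
-/

section LatticeOrderedGroup

variable {E : Type*} [AddCommGroup E] [Lattice E] [IsOrderedAddMonoid E]

lemma inf_add_le_add_inf {a b c : E} (ha : 0 ≤ a) (hb : 0 ≤ b) (hc : 0 ≤ c) :
    a ⊓ (b + c) ≤ a ⊓ b + a ⊓ c := by
  have hab : 0 ≤ a ⊓ b := le_inf ha hb
  have h₁ : a ⊓ (b + c) ≤ a ⊓ b + c := by
    rw [inf_add]
    exact inf_le_inf_right _ (le_add_of_nonneg_right hc)
  have h₂ : a ⊓ (b + c) - a ⊓ b ≤ a ⊓ c :=
    le_inf ((sub_le_self _ hab).trans inf_le_left) (sub_le_iff_le_add'.2 h₁)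
  exact sub_le_iff_le_add'.1 h₂

lemma inf_nsmul_eq_zero {a b : E} (ha : 0 ≤ a) (hb : 0 ≤ b) (h : a ⊓ b = 0) (n : ℕ) :
    a ⊓ n • b = 0 := by
  induction n with
  | zero => simpa using ha
  | succ n ih =>
    refine le_antisymm ?_ (le_inf ha (nsmul_nonneg hb _))
    calc a ⊓ (n + 1) • b ≤ a ⊓ n • b + a ⊓ b := by
          rw [succ_nsmul]; exact inf_add_le_add_inf ha (nsmul_nonneg hb n) hb
      _ = 0 := by rw [ih, h, add_zero]

lemma nsmul_inf_nsmul_eq_zero {a b : E} (ha : 0 ≤ a) (hb : 0 ≤ b) (h : a ⊓ b = 0) (m n : ℕ) :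
    m • a ⊓ n • b = 0 := by
  have h' : m • a ⊓ b = 0 := by
    rw [inf_comm] at h ⊢; exact inf_nsmul_eq_zero hb ha h m
  exact inf_nsmul_eq_zero (nsmul_nonneg ha m) hb h' n

lemma posPart_sub_eq_self_of_inf_eq_zero {a b : E} (h : a ⊓ b = 0) : (a - b)⁺ = a := by
  have := inf_eq_sub_posPart_sub a b
  rw [h] at this
  exact (sub_eq_zero.1 this.symm).symm

lemma posPart_nsmul (n : ℕ) (a : E) : (n • a)⁺ = n • a⁺ := by
  conv_lhs => rw [← posPart_sub_negPart a, nsmul_sub]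
  exact posPart_sub_eq_self_of_inf_eq_zero
    (nsmul_inf_nsmul_eq_zero (posPart_nonneg a) (negPart_nonneg a)
      (posPart_inf_negPart_eq_zero a) n n)

lemma nonpos_of_nsmul_nonpos {n : ℕ} (hn : n ≠ 0) {a : E} (h : n • a ≤ 0) : a ≤ 0 := by
  have h₀ : n • a⁺ = 0 := by rw [← posPart_nsmul, posPart_eq_zero.2 h]
  have h₁ : a⁺ ≤ n • a⁺ := by
    simpa using nsmul_le_nsmul_left (posPart_nonneg a) (Nat.one_le_iff_ne_zero.2 hn)
  exact (le_posPart a).trans (h₁.trans h₀.le)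

lemma le_of_nsmul_le_nsmul_of_ne_zero {n : ℕ} (hn : n ≠ 0) {a b : E} (h : n • a ≤ n • b) :
    a ≤ b :=
  sub_nonpos.1 (nonpos_of_nsmul_nonpos hn (by rwa [nsmul_sub, sub_nonpos]))

lemma posPart_inf_posPart_sub_swap (a b : E) : (a - b)⁺ ⊓ (b - a)⁺ = 0 := by
  simpa [negPart_def, posPart_def] using posPart_inf_negPart_eq_zero (a - b)

lemma nsmul_inf_posPart_sub_nsmul_le (n : ℕ) {a b : E} (hb : 0 ≤ b) :
    n • (a ⊓ (b - n • a)⁺) ≤ b := by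
  set x := n • a - b
  have hx : n • (b - n • a)⁺ = n • x⁻ := by simp [x, negPart_def, posPart_def]
  have key : n • a ⊓ n • x⁻ - b ≤ 0 := by
    calc n • a ⊓ n • x⁻ - b = x ⊓ (n • x⁻ - b) := by rw [inf_sub]
      _ ≤ x⁺ ⊓ n • x⁻ := inf_le_inf (le_posPart x) (sub_le_self _ hb)
      _ = 0 := inf_nsmul_eq_zero (posPart_nonneg x) (negPart_nonneg x)
            (posPart_inf_negPart_eq_zero x) n
  calc n • (a ⊓ (b - n • a)⁺) ≤ n • a ⊓ n • (b - n • a)⁺ :=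
        le_inf (nsmul_le_nsmul_right inf_le_left n) (nsmul_le_nsmul_right inf_le_right n)
    _ ≤ b := by rw [hx]; exact sub_nonpos.1 key

lemma add_sub_le_inf {a b u : E} (ha : a ≤ u) (hb : b ≤ u) : a + b - u ≤ a ⊓ b := by
  rw [← inf_add_sup a b, add_sub_assoc]
  exact add_le_of_nonpos_right (sub_nonpos.2 (sup_le ha hb))

lemma exists_add_eq_of_abs_le_add {z v w : E} (hv : 0 ≤ v) (hw : 0 ≤ w) (hz : |z| ≤ v + w) :
    ∃ z₁ z₂ : E, z = z₁ + z₂ ∧ |z₁| ≤ v ∧ |z₂| ≤ w := by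
  obtain ⟨hz₁, hz₂⟩ := abs_le'.1 hz
  refine ⟨z - (z - v)⁺ ⊓ (z + v), (z - v)⁺ ⊓ (z + v), (sub_add_cancel _ _).symm, ?_, ?_⟩
  · refine abs_le'.2 ⟨sub_le_comm.1 (le_inf (le_posPart _) ?_), ?_⟩
    · exact (sub_le_self z hv).trans (le_add_of_nonneg_right hv)
    · rw [neg_sub, sub_le_iff_le_add, add_comm]
      exact inf_le_right
  · refine abs_le'.2 ⟨inf_le_left.trans (sup_le ?_ hw), neg_le.1 (le_inf ?_ ?_)⟩
    · rwa [sub_le_iff_le_add, add_comm]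
    · exact (neg_nonpos.2 hw).trans (posPart_nonneg _)
    · calc -w = -(v + w) + v := by abel
        _ ≤ z + v := add_le_add_left (neg_le.1 hz₂) v

end LatticeOrderedGroup

lemma nsmul_inv_natCast_smul {E : Type*} [AddCommGroup E] [Module ℝ E] {n : ℕ} (hn : n ≠ 0)
    (a : E) : n • ((n : ℝ)⁻¹ • a) = a := by
  rw [← Nat.cast_smul_eq_nsmul ℝ, smul_smul, mul_inv_cancel₀ (Nat.cast_ne_zero.2 hn), one_smul]

lemma inv_natCast_smul_nonneg {E : Type*} [AddCommGroup E] [Lattice E] [IsOrderedAddMonoid E]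
    [Module ℝ E] (n : ℕ) {a : E} (ha : 0 ≤ a) : 0 ≤ (n : ℝ)⁻¹ • a := by
  rcases eq_or_ne n 0 with rfl | hn
  · simp
  · exact le_of_nsmul_le_nsmul_of_ne_zero hn (by rwa [nsmul_zero, nsmul_inv_natCast_smul hn])

lemma norm_le_norm_of_nonneg_of_le {E : Type*} [NormedAddCommGroup E] [Lattice E] [HasSolidNorm E]
    [IsOrderedAddMonoid E] {a b : E} (ha : 0 ≤ a) (h : a ≤ b) : ‖a‖ ≤ ‖b‖ :=
  HasSolidNorm.solid (by rwa [abs_of_nonneg ha, abs_of_nonneg (ha.trans h)])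

lemma apply_le_opNorm_mul_norm_of_abs_le {E : Type*} [NormedAddCommGroup E] [Lattice E]
    [HasSolidNorm E] [NormedSpace ℝ E] (f : E →L[ℝ] ℝ) {x y : E} (hy : |y| ≤ x) :
    f y ≤ ‖f‖ * ‖x‖ :=
  (le_abs_self _).trans <| (f.le_opNorm y).trans <| mul_le_mul_of_nonneg_left
    (HasSolidNorm.solid (hy.trans (le_abs_self x))) (norm_nonneg f)

lemma bddAbove_image_abs_le {E : Type*} [NormedAddCommGroup E] [Lattice E] [HasSolidNorm E]
    [NormedSpace ℝ E] (f : E →L[ℝ] ℝ) (x : E) : BddAbove ((fun y => f y) '' {y | |y| ≤ x}) :=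
  ⟨‖f‖ * ‖x‖, by rintro _ ⟨y, hy, rfl⟩; exact apply_le_opNorm_mul_norm_of_abs_le f hy⟩

lemma le_absVal {E : Type*} [NormedAddCommGroup E] [Lattice E] [HasSolidNorm E]
    [NormedSpace ℝ E] (f : E →L[ℝ] ℝ) {x y : E} (hy : |y| ≤ x) : f y ≤ absVal f x :=
  le_csSup (bddAbove_image_abs_le f x) ⟨y, hy, rfl⟩

lemma abs_apply_le_absVal {E : Type*} [NormedAddCommGroup E] [Lattice E] [HasSolidNorm E]
    [NormedSpace ℝ E] (f : E →L[ℝ] ℝ) {x y : E} (hy : |y| ≤ x) : |f y| ≤ absVal f x := by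
  have h := le_absVal f (show |-y| ≤ x by rwa [abs_neg])
  rw [map_neg] at h
  exact abs_le.2 ⟨neg_le.1 h, le_absVal f hy⟩

lemma absVal_le {E : Type*} [NormedAddCommGroup E] [Lattice E] [IsOrderedAddMonoid E]
    [NormedSpace ℝ E] (f : E →L[ℝ] ℝ) {x : E} (hx : 0 ≤ x) {c : ℝ}
    (h : ∀ y, |y| ≤ x → f y ≤ c) : absVal f x ≤ c :=
  csSup_le ⟨f 0, 0, by simpa using hx, rfl⟩ (by rintro _ ⟨y, hy, rfl⟩; exact h y hy)

section AbsVal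

variable {E : Type*} [NormedAddCommGroup E] [Lattice E] [HasSolidNorm E] [IsOrderedAddMonoid E]
  [NormedSpace ℝ E] (f : E →L[ℝ] ℝ)

lemma absVal_nonneg {x : E} (hx : 0 ≤ x) : 0 ≤ absVal f x :=
  (abs_nonneg _).trans (abs_apply_le_absVal f (y := 0) (by simpa using hx))

lemma absVal_le_opNorm_mul_norm {x : E} (hx : 0 ≤ x) : absVal f x ≤ ‖f‖ * ‖x‖ :=
  absVal_le f hx fun _ => apply_le_opNorm_mul_norm_of_abs_le f

lemma absVal_mono {x x' : E} (hx : 0 ≤ x) (h : x ≤ x') : absVal f x ≤ absVal f x' :=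
  absVal_le f hx fun _ hy => le_absVal f (hy.trans h)

lemma absVal_zero : absVal f 0 = 0 :=
  le_antisymm ((absVal_le_opNorm_mul_norm f le_rfl).trans_eq (by simp)) (absVal_nonneg f le_rfl)

lemma absVal_add {x x' : E} (hx : 0 ≤ x) (hx' : 0 ≤ x') :
    absVal f (x + x') = absVal f x + absVal f x' := by
  refine le_antisymm (absVal_le f (add_nonneg hx hx') fun z hz => ?_) ?_
  · obtain ⟨z₁, z₂, rfl, h₁, h₂⟩ := exists_add_eq_of_abs_le_add hx hx' hz
    rw [map_add]
    exact add_le_add (le_absVal f h₁) (le_absVal f h₂)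
  · rw [← le_sub_iff_add_le]
    refine absVal_le f hx fun y hy => le_sub_comm.1 (absVal_le f hx' fun y' hy' => ?_)
    rw [le_sub_iff_add_le, ← map_add, add_comm y']
    exact le_absVal f ((abs_add_le y y').trans (add_le_add hy hy'))

lemma absVal_nsmul (n : ℕ) {x : E} (hx : 0 ≤ x) : absVal f (n • x) = n * absVal f x := by
  induction n with
  | zero => simp [absVal_zero]
  | succ n ih => rw [succ_nsmul, absVal_add f (nsmul_nonneg hx n) hx, ih]; push_cast; ring

lemma absVal_sum {ι : Type*} (s : Finset ι) {x : ι → E} (hx : ∀ i ∈ s, 0 ≤ x i) :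
    absVal f (∑ i ∈ s, x i) = ∑ i ∈ s, absVal f (x i) := by
  classical
  induction s using Finset.induction_on with
  | empty => simp [absVal_zero]
  | insert a s ha ih =>
    rw [Finset.sum_insert ha, Finset.sum_insert ha, absVal_add f (hx a (by simp))
      (Finset.sum_nonneg fun i hi => hx i (by simp [hi])), ih fun i hi => hx i (by simp [hi])]

lemma absVal_inv_natCast_smul (n : ℕ) {x : E} (hx : 0 ≤ x) :
    absVal f ((n : ℝ)⁻¹ • x) = absVal f x / n := by
  rcases eq_or_ne n 0 with rfl | hn
  · simp [absVal_zero]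
  · conv_rhs => rw [← nsmul_inv_natCast_smul hn x, absVal_nsmul f n (inv_natCast_smul_nonneg n hx)]
    field_simp

lemma absVal_le_absVal_add {x x' : E} (hx : 0 ≤ x) (hx' : 0 ≤ x') :
    absVal f x ≤ absVal f x' + ‖f‖ * ‖x - x'‖ := by
  calc absVal f x ≤ absVal f (x' + |x - x'|) :=
        absVal_mono f hx (sub_le_iff_le_add'.1 (le_abs_self _))
    _ ≤ absVal f x' + ‖f‖ * ‖x - x'‖ := by
        rw [absVal_add f hx' (abs_nonneg _), ← norm_abs_eq_norm (x - x')]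
        exact add_le_add le_rfl (absVal_le_opNorm_mul_norm f (abs_nonneg _))

lemma Filter.Tendsto.absVal {v : ℕ → E} {x : E} (h : Tendsto v atTop (𝓝 x))
    (hv : ∀ n, 0 ≤ v n) (hx : 0 ≤ x) :
    Tendsto (fun n => absVal f (v n)) atTop (𝓝 (absVal f x)) := by
  have hf : Tendsto (fun n => ‖f‖ * ‖v n - x‖) atTop (𝓝 0) := by
    simpa using (tendsto_iff_norm_sub_tendsto_zero.1 h).const_mul ‖f‖
  refine tendsto_iff_norm_sub_tendsto_zero.2
    (squeeze_zero (fun n => norm_nonneg _) (fun n => ?_) hf)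
  rw [Real.norm_eq_abs, abs_sub_le_iff]
  constructor
  · linarith [absVal_le_absVal_add f (hv n) hx]
  · have := absVal_le_absVal_add f hx (hv n)
    rw [norm_sub_rev] at this
    linarith

lemma abs_apply_le_absVal_add {u : E} (hu : 0 ≤ u) (a : E) :
    |f a| ≤ absVal f u + ‖f‖ * ‖(|a| - u)⁺‖ := by
  obtain ⟨b, c, hbc, hb, hc⟩ := exists_add_eq_of_abs_le_add hu (posPart_nonneg (|a| - u))
    (sub_le_iff_le_add'.1 (le_posPart _))
  have hc' : ‖c‖ ≤ ‖(|a| - u)⁺‖ :=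
    HasSolidNorm.solid (hc.trans_eq (abs_of_nonneg (posPart_nonneg _)).symm)
  calc |f a| ≤ |f b| + |f c| := by rw [hbc, map_add]; exact abs_add_le _ _
    _ ≤ absVal f u + ‖f‖ * ‖(|a| - u)⁺‖ :=
        add_le_add (abs_apply_le_absVal f hb)
          ((f.le_opNorm c).trans (mul_le_mul_of_nonneg_left hc' (norm_nonneg f)))

end AbsVal

lemma FunDisjoint.exists_absVal_add_lt {E : Type*} [NormedAddCommGroup E] [Lattice E]
    [NormedSpace ℝ E] {f g : E →L[ℝ] ℝ} (h : FunDisjoint f g) {x : E} (hx : 0 ≤ x) {γ : ℝ}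
    (hγ : 0 < γ) :
    ∃ y, 0 ≤ y ∧ y ≤ x ∧ absVal f y + absVal g (x - y) < γ := by
  have hne : ((fun y => absVal f y + absVal g (x - y)) '' {y | 0 ≤ y ∧ y ≤ x}).Nonempty :=
    ⟨_, 0, ⟨le_rfl, hx⟩, rfl⟩
  obtain ⟨_, ⟨y, ⟨hy₀, hyx⟩, rfl⟩, hlt⟩ := exists_lt_of_csInf_lt hne ((h x hx).symm ▸ hγ)
  exact ⟨y, hy₀, hyx, hlt⟩

/-- The order interval `[0, u]` is L-weakly compact. -/
def DisjointNullBelow {E : Type*} [NormedAddCommGroup E] [Lattice E] (u : E) : Prop :=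
  ∀ z : ℕ → E, (∀ n, 0 ≤ z n) → (∀ n, z n ≤ u) → Pairwise (fun m n => z m ⊓ z n = 0) →
    Tendsto (fun n => ‖z n‖) atTop (𝓝 0)

lemma pairwise_inf_eq_zero_of_le {E : Type*} [Lattice E] [Zero E] {z z' : ℕ → E}
    (hz' : ∀ n, 0 ≤ z' n) (hle : ∀ n, z' n ≤ z n) (hz : Pairwise (fun m n => z m ⊓ z n = 0)) :
    Pairwise (fun m n => z' m ⊓ z' n = 0) := fun m n hmn =>
  le_antisymm ((inf_le_inf (hle m) (hle n)).trans (hz hmn).le) (le_inf (hz' m) (hz' n))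

namespace DisjointNullBelow

section

variable {E : Type*} [NormedAddCommGroup E] [Lattice E] {u v : E}

lemma mono (hu : DisjointNullBelow u) (hvu : v ≤ u) : DisjointNullBelow v :=
  fun z hz₀ hzv hz => hu z hz₀ (fun n => (hzv n).trans hvu) hz

lemma zero : DisjointNullBelow (0 : E) := fun z hz₀ hz _ => by
  simp [fun n => le_antisymm (hz n) (hz₀ n)]

end

lemma add {E : Type*} [NormedAddCommGroup E] [Lattice E] [IsOrderedAddMonoid E] {u v : E}
    (hu : DisjointNullBelow u) (hv : DisjointNullBelow v) (hu₀ : 0 ≤ u) (hv₀ : 0 ≤ v) :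
    DisjointNullBelow (u + v) := by
  intro z hz₀ hzuv hz
  have h₁ := hu (fun n => z n ⊓ u) (fun n => le_inf (hz₀ n) hu₀) (fun n => inf_le_right)
    (pairwise_inf_eq_zero_of_le (fun n => le_inf (hz₀ n) hu₀) (fun n => inf_le_left) hz)
  have hsub : ∀ n, (z n - u)⁺ ≤ z n := fun n => sup_le (sub_le_self _ hu₀) (hz₀ n)
  have h₂ := hv (fun n => (z n - u)⁺) (fun n => posPart_nonneg _)
    (fun n => sup_le (sub_le_iff_le_add'.2 (hzuv n)) hv₀)
    (pairwise_inf_eq_zero_of_le (fun n => posPart_nonneg _) hsub hz)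
  refine squeeze_zero (fun n => norm_nonneg _) (fun n => ?_) (by simpa using h₁.add h₂)
  calc ‖z n‖ = ‖z n ⊓ u + (z n - u)⁺‖ := by rw [inf_eq_sub_posPart_sub, sub_add_cancel]
    _ ≤ ‖z n ⊓ u‖ + ‖(z n - u)⁺‖ := norm_add_le _ _

end DisjointNullBelow

lemma LWeaklyCompact.disjointNullBelow_of_mem_closure {E : Type*} [NormedAddCommGroup E]
    [Lattice E] [IsOrderedAddMonoid E] {A : Set E}
    (hA : LWeaklyCompact A) {u : E} (hu : u ∈ AddSubmonoid.closure (abs '' A)) :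
    0 ≤ u ∧ DisjointNullBelow u := by
  induction hu using AddSubmonoid.closure_induction with
  | mem _ h =>
    obtain ⟨a, ha, rfl⟩ := h
    refine ⟨abs_nonneg a, fun z hz₀ hza hz => hA.2 z (fun n => ⟨a, ha, ?_⟩) fun m n hmn => ?_⟩
    · rw [abs_of_nonneg (hz₀ n)]; exact hza n
    · simpa [ElemDisjoint, abs_of_nonneg (hz₀ m), abs_of_nonneg (hz₀ n)] using hz hmn
  | zero => exact ⟨le_rfl, DisjointNullBelow.zero⟩
  | add _ _ _ _ hu hv => exact ⟨add_nonneg hu.1 hv.1, hu.2.add hv.2 hu.1 hv.1⟩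

section Disjointify

variable {E : Type*} [NormedAddCommGroup E] [Lattice E] [IsOrderedAddMonoid E] [NormedSpace ℝ E]

/-- The weights make the terms disjoint: for `s < t`, the `s`-th term lies below `(y s - 2⁻ˢ • u)⁺`
and the `t`-th below `(u - 2 ^ s • y s)⁺`. -/
noncomputable def disjointifyBelow (u : E) (y : ℕ → E) (t : ℕ) : E :=
  (y t - (∑ s ∈ Finset.range t, (2 ^ s : ℕ) • y s + ((2 ^ t : ℕ) : ℝ)⁻¹ • u))⁺

lemma disjointifyBelow_inf_eq_zero_of_lt {u : E} {y : ℕ → E} (hy₀ : ∀ t, 0 ≤ y t)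
    (hyu : ∀ t, y t ≤ u) {s t : ℕ} (hst : s < t) :
    disjointifyBelow u y s ⊓ disjointifyBelow u y t = 0 := by
  have hu₀ : 0 ≤ u := (hy₀ 0).trans (hyu 0)
  have hsum : ∀ r, 0 ≤ ∑ i ∈ Finset.range r, (2 ^ i : ℕ) • y i :=
    fun r => Finset.sum_nonneg fun i _ => nsmul_nonneg (hy₀ i) _
  set w := y s - ((2 ^ s : ℕ) : ℝ)⁻¹ • u
  have hs : disjointifyBelow u y s ≤ w⁺ :=
    sup_le_sup_right (sub_le_sub_left (le_add_of_nonneg_left (hsum s)) _) 0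
  have ht : disjointifyBelow u y t ≤ (2 ^ s : ℕ) • w⁻ := by
    have hst' : (2 ^ s : ℕ) • y s ≤ ∑ i ∈ Finset.range t, (2 ^ i : ℕ) • y i :=
      Finset.single_le_sum (f := fun i => (2 ^ i : ℕ) • y i)
        (fun i _ => nsmul_nonneg (hy₀ i) _) (Finset.mem_range.2 hst)
    calc disjointifyBelow u y t ≤ (u - (2 ^ s : ℕ) • y s)⁺ :=
          sup_le_sup_right (sub_le_sub (hyu t)
            (hst'.trans (le_add_of_nonneg_right (inv_natCast_smul_nonneg _ hu₀)))) 0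
      _ = (2 ^ s : ℕ) • w⁻ := by
          rw [← posPart_neg, ← posPart_nsmul, neg_sub, nsmul_sub,
            nsmul_inv_natCast_smul (by positivity)]
  exact le_antisymm ((inf_le_inf hs ht).trans_eq (inf_nsmul_eq_zero (posPart_nonneg w)
    (negPart_nonneg w) (posPart_inf_negPart_eq_zero w) _)) (le_inf (posPart_nonneg _)
      (posPart_nonneg _))

lemma pairwise_disjointifyBelow {u : E} {y : ℕ → E} (hy₀ : ∀ t, 0 ≤ y t) (hyu : ∀ t, y t ≤ u) :
    Pairwise (fun s t => disjointifyBelow u y s ⊓ disjointifyBelow u y t = 0) := by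
  intro s t hst
  rcases hst.lt_or_gt with h | h
  · exact disjointifyBelow_inf_eq_zero_of_lt hy₀ hyu h
  · rw [inf_comm]; exact disjointifyBelow_inf_eq_zero_of_lt hy₀ hyu h

lemma disjointifyBelow_le {u : E} {y : ℕ → E} (hyu : ∀ t, y t ≤ u) (hy₀ : ∀ t, 0 ≤ y t) (t : ℕ) :
    disjointifyBelow u y t ≤ u := by
  refine sup_le ((sub_le_self _ (add_nonneg ?_ ?_)).trans (hyu t)) ((hy₀ t).trans (hyu t))
  · exact Finset.sum_nonneg fun i _ => nsmul_nonneg (hy₀ i) _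
  · exact inv_natCast_smul_nonneg _ ((hy₀ t).trans (hyu t))

variable [HasSolidNorm E]

lemma absVal_le_absVal_disjointifyBelow (f : E →L[ℝ] ℝ) {u : E} (hu₀ : 0 ≤ u) {y : ℕ → E}
    (hy₀ : ∀ t, 0 ≤ y t) (t : ℕ) :
    absVal f (y t) ≤ absVal f (disjointifyBelow u y t) +
      (∑ s ∈ Finset.range t, 2 ^ s * absVal f (y s) + absVal f u / 2 ^ t) := by
  have hsum : 0 ≤ ∑ s ∈ Finset.range t, (2 ^ s : ℕ) • y s :=
    Finset.sum_nonneg fun i _ => nsmul_nonneg (hy₀ i) _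
  have hinv := inv_natCast_smul_nonneg (2 ^ t) hu₀
  have hd : 0 ≤ disjointifyBelow u y t := posPart_nonneg _
  calc absVal f (y t) ≤ absVal f (disjointifyBelow u y t +
        (∑ s ∈ Finset.range t, (2 ^ s : ℕ) • y s + ((2 ^ t : ℕ) : ℝ)⁻¹ • u)) :=
        absVal_mono f (hy₀ t) (sub_le_iff_le_add.1 (le_posPart _))
    _ = _ := by
        rw [absVal_add f hd (add_nonneg hsum hinv), absVal_add f hsum hinv,
          absVal_sum f _ fun s _ => nsmul_nonneg (hy₀ s) _, absVal_inv_natCast_smul f _ hu₀]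
        simp [absVal_nsmul f _ (hy₀ _)]

end Disjointify

lemma sum_range_mul_half_pow_le {c : ℝ} (hc : 0 ≤ c) (n : ℕ) :
    ∑ s ∈ Finset.range n, c * (1 / 2) ^ s ≤ 2 * c := by
  rw [← Finset.mul_sum, mul_comm]
  exact mul_le_mul_of_nonneg_right (sum_geometric_two_le n) hc

lemma sum_range_two_pow_mul_le {a : ℕ → ℝ} {c : ℝ} (hc : 0 ≤ c) {t : ℕ}
    (ha : ∀ s ∈ Finset.range t, a s ≤ c * (1 / 4) ^ s) :
    ∑ s ∈ Finset.range t, 2 ^ s * a s ≤ 2 * c := by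
  refine (Finset.sum_le_sum fun s hs => ?_).trans (sum_range_mul_half_pow_le hc t)
  calc 2 ^ s * a s ≤ 2 ^ s * (c * (1 / 4) ^ s) :=
        mul_le_mul_of_nonneg_left (ha s hs) (by positivity)
    _ = c * (1 / 2) ^ s := by rw [mul_left_comm, ← mul_pow]; norm_num

lemma sum_range_mul_half_pow_add_le {c : ℝ} (hc : 0 ≤ c) (k n : ℕ) :
    ∑ l ∈ Finset.range n, c * (1 / 2) ^ (k + l) ≤ 2 * c :=
  (Finset.sum_le_sum fun l _ => mul_le_mul_of_nonneg_left
    (pow_le_pow_of_le_one (by norm_num) (by norm_num) (Nat.le_add_left l k)) hc).trans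
    (sum_range_mul_half_pow_le hc n)

lemma exists_strictMono_lt_of_sum_range_le {a : ℕ → ℕ → ℝ} {B : ℝ} (ha : ∀ i j, 0 ≤ a i j)
    (hB : ∀ i n, ∑ j ∈ Finset.range n, a i j ≤ B) {η : ℕ → ℝ} (hη : ∀ s, 0 < η s)
    (hη_anti : Antitone η) : ∃ J : ℕ → ℕ, StrictMono J ∧ ∀ s t, s < t → a (J t) (J s) < η s := by
  set 𝒰 : Ultrafilter ℕ := hyperfilter ℕ
  have h𝒰 : ∀ {p : ℕ → Prop}, (∀ᶠ i in atTop, p i) → ∀ᶠ i in (𝒰 : Filter ℕ), p i := fun hp =>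
    hp.filter_mono (hyperfilter_le_cofinite.trans_eq Nat.cofinite_eq_atTop)
  have hle : ∀ i j, a i j ≤ B := fun i j =>
    (Finset.single_le_sum (fun j _ => ha i j) (Finset.self_mem_range_succ j)).trans (hB i (j + 1))
  -- Column limits along an ultrafilter: their partial sums stay below `B`, so they tend to zero.
  have hc : ∀ j, ∃ c, Tendsto (fun i => a i j) (𝒰 : Filter ℕ) (𝓝 c) := fun j =>
    let ⟨c, _, hc⟩ := isCompact_Icc.ultrafilter_le_nhds (𝒰.map fun i => a i j)
      (le_principal_iff.2 (mem_map.2 (univ_mem' fun i => ⟨ha i j, hle i j⟩)))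
    ⟨c, hc⟩
  choose c hc using hc
  have hc₀ : ∀ j, 0 ≤ c j := fun j => ge_of_tendsto (hc j) (Eventually.of_forall fun i => ha i j)
  have hc_sum : ∀ n, ∑ j ∈ Finset.range n, c j ≤ B := fun n =>
    le_of_tendsto (tendsto_finsetSum _ fun j _ => hc j) (Eventually.of_forall fun i => hB i n)
  have hc_lim : Tendsto c atTop (𝓝 0) := (summable_of_sum_range_le hc₀ hc_sum).tendsto_atTop_zero
  -- A pair `(s, j)` records the level `s` at which column `j` was chosen.
  obtain ⟨F, -, hF⟩ := exists_seq_of_forall_finset_exists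
    (fun q : ℕ × ℕ => c q.2 < η q.1)
    (fun q q' => q.1 < q'.1 ∧ q.2 < q'.2 ∧ a q'.2 q.2 < η q.1) fun S hS => by
      set s := S.sup Prod.fst + 1
      have hnext : ∀ᶠ i in (𝒰 : Filter ℕ), ∀ q ∈ S, q.2 < i ∧ a i q.2 < η q.1 :=
        (eventually_all_finset S).2 fun q hq =>
          (h𝒰 (eventually_gt_atTop q.2)).and ((hc q.2).eventually_lt_const (hS q hq))
      obtain ⟨i, hi, hiS⟩ := ((h𝒰 (hc_lim.eventually_lt_const (hη s))).and hnext).exists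
      exact ⟨(s, i), hi, fun q hq =>
        ⟨Nat.lt_succ_of_le (Finset.le_sup (f := Prod.fst) hq), hiS q hq⟩⟩
  have hlevel : StrictMono fun t => (F t).1 := fun s t hst => (hF s t hst).1
  refine ⟨fun t => (F t).2, fun s t hst => (hF s t hst).2.1, fun s t hst => ?_⟩
  exact (hF s t hst).2.2.trans_le (hη_anti hlevel.le_apply)

namespace DisjointNullBelow

variable {E : Type*} [NormedAddCommGroup E] [Lattice E] [HasSolidNorm E] [IsOrderedAddMonoid E]
  [NormedSpace ℝ E] {u : E}

lemma exists_norm_lt_of_sum_range_le (hu : DisjointNullBelow u) {y : ℕ → E}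
    (hy₀ : ∀ j, 0 ≤ y j) (hsum : ∀ n, ∑ j ∈ Finset.range n, y j ≤ u) {ε : ℝ} (hε : 0 < ε) :
    ∃ j, ‖y j‖ < ε := by
  by_contra! hbig
  have hu₀ : 0 ≤ u := by simpa using hsum 0
  have hyu : ∀ j, y j ≤ u := fun j =>
    (Finset.single_le_sum (fun i _ => hy₀ i) (Finset.self_mem_range_succ j)).trans (hsum (j + 1))
  choose g hg₁ hg₂ using fun j => exists_dual_vector'' ℝ (y j)
  have habsVal : ∀ i {v : E}, 0 ≤ v → absVal (g i) v ≤ ‖v‖ := fun i v hv =>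
    (absVal_le_opNorm_mul_norm _ hv).trans (mul_le_of_le_one_left (norm_nonneg v) (hg₁ i))
  have hrow : ∀ i n, ∑ j ∈ Finset.range n, absVal (g i) (y j) ≤ ‖u‖ := fun i n => by
    rw [← absVal_sum _ _ fun j _ => hy₀ j]
    exact (absVal_mono _ (Finset.sum_nonneg fun j _ => hy₀ j) (hsum n)).trans (habsVal i hu₀)
  -- Pass to a subsequence on which each functional is small on all earlier terms.
  obtain ⟨J, -, hJ⟩ := exists_strictMono_lt_of_sum_range_le (fun i j => absVal_nonneg _ (hy₀ j))
    hrow (η := fun s => ε / 8 * (1 / 4) ^ s) (fun s => by positivity)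
    fun s t hst => mul_le_mul_of_nonneg_left (pow_le_pow_of_le_one (by norm_num) (by norm_num) hst)
      (by positivity)
  set d := disjointifyBelow u (fun t => y (J t))
  have hd := hu d (fun t => posPart_nonneg _) (disjointifyBelow_le (fun t => hyu _) fun t => hy₀ _)
    (pairwise_disjointifyBelow (fun t => hy₀ _) fun t => hyu _)
  have hlow : ∀ t, ε - ε / 4 - ‖u‖ / 2 ^ t ≤ ‖d t‖ := fun t => by
    have hmain : absVal (g (J t)) (y (J t)) ≤ absVal (g (J t)) (d t) +
        (∑ s ∈ Finset.range t, 2 ^ s * absVal (g (J t)) (y (J s)) + absVal (g (J t)) u / 2 ^ t) :=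
      absVal_le_absVal_disjointifyBelow (g (J t)) hu₀ (fun t => hy₀ (J t)) t
    have hearly : ∑ s ∈ Finset.range t, 2 ^ s * absVal (g (J t)) (y (J s)) ≤ ε / 4 :=
      (sum_range_two_pow_mul_le (c := ε / 8) (by positivity)
        fun s hs => (hJ s t (Finset.mem_range.1 hs)).le).trans_eq (by ring)
    have hy : ‖y (J t)‖ ≤ absVal (g (J t)) (y (J t)) :=
      (hg₂ _).symm.le.trans (le_absVal _ (abs_of_nonneg (hy₀ _)).le)
    have hu' : absVal (g (J t)) u / 2 ^ t ≤ ‖u‖ / 2 ^ t :=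
      div_le_div_of_nonneg_right (habsVal _ hu₀) (by positivity)
    have hdt : absVal (g (J t)) (d t) ≤ ‖d t‖ := habsVal _ (posPart_nonneg _)
    linarith [hbig (J t)]
  have hgeom : Tendsto (fun t : ℕ => ‖u‖ / 2 ^ t) atTop (𝓝 0) :=
    tendsto_const_nhds.div_atTop (tendsto_pow_atTop_atTop_of_one_lt one_lt_two)
  obtain ⟨t, ht₁, ht₂⟩ := ((hd.eventually_lt_const (by positivity : 0 < ε / 4)).and
    (hgeom.eventually_lt_const (by positivity : 0 < ε / 4))).exists
  linarith [hlow t]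

lemma cauchySeq_of_monotone (hu : DisjointNullBelow u) {w : ℕ → E} (hw₀ : ∀ n, 0 ≤ w n)
    (hwu : ∀ n, w n ≤ u) (hw : Monotone w) : CauchySeq w := by
  rw [Metric.cauchySeq_iff']
  by_contra! h
  obtain ⟨ε, hε, h⟩ := h
  choose next hnext_ge hnext using h
  set φ : ℕ → ℕ := fun k => next^[k] 0
  have hφ : ∀ k, φ (k + 1) = next (φ k) := fun k => Function.iterate_succ_apply' next k 0
  have hy₀ : ∀ k, 0 ≤ w (φ (k + 1)) - w (φ k) := fun k =>
    sub_nonneg.2 (hw (hφ k ▸ hnext_ge (φ k)))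
  have hsum : ∀ n, ∑ k ∈ Finset.range n, (w (φ (k + 1)) - w (φ k)) ≤ u := fun n => by
    rw [Finset.sum_range_sub (fun k => w (φ k))]
    exact (sub_le_self _ (hw₀ _)).trans (hwu _)
  obtain ⟨j, hj⟩ := hu.exists_norm_lt_of_sum_range_le hy₀ hsum hε
  have := hnext (φ j)
  rw [dist_eq_norm, ← hφ] at this
  exact this.not_gt hj

variable [CompleteSpace E]

/-- `c` is the infimum of `p`, obtained as the norm limit of the partial infima. -/
lemma exists_le_absVal_sub_le (hu : DisjointNullBelow u) {p : ℕ → E}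
    (hp₀ : ∀ l, 0 ≤ p l) (hpu : ∀ l, p l ≤ u) (f : E →L[ℝ] ℝ) {β : ℝ}
    (hβ : ∀ n, ∑ l ∈ Finset.range n, absVal f (u - p l) ≤ β) :
    ∃ c, 0 ≤ c ∧ (∀ l, c ≤ p l) ∧ absVal f (u - c) ≤ β := by
  set I : ℕ → E := fun n => Nat.rec u (fun l acc => acc ⊓ p l) n
  have hI_succ : ∀ n, I (n + 1) = I n ⊓ p n := fun n => rfl
  have hI₀ : ∀ n, 0 ≤ I n ∧ I n ≤ u := fun n => by
    induction n with
    | zero => exact ⟨(hp₀ 0).trans (hpu 0), le_rfl⟩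
    | succ n ih => rw [hI_succ]; exact ⟨le_inf ih.1 (hp₀ n), inf_le_left.trans ih.2⟩
  have hI_anti : Antitone I := antitone_nat_of_succ_le fun n => by rw [hI_succ]; exact inf_le_left
  have hI_sum : ∀ n, u - I n ≤ ∑ l ∈ Finset.range n, (u - p l) := fun n => by
    induction n with
    | zero => simp [I]
    | succ n ih =>
      rw [hI_succ, Finset.sum_range_succ]
      calc u - I n ⊓ p n ≤ u - (I n + p n - u) :=
            sub_le_sub_left (add_sub_le_inf (hI₀ n).2 (hpu n)) u
        _ = (u - I n) + (u - p n) := by abel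
        _ ≤ _ := add_le_add_left ih _
  have hw : CauchySeq fun n => u - I n := hu.cauchySeq_of_monotone
    (fun n => sub_nonneg.2 (hI₀ n).2) (fun n => sub_le_self _ (hI₀ n).1)
    fun m n hmn => sub_le_sub_left (hI_anti hmn) u
  obtain ⟨L, hL⟩ := cauchySeq_tendsto_of_complete hw
  have hI : Tendsto I atTop (𝓝 (u - L)) := by simpa using hL.const_sub u
  refine ⟨u - L, ge_of_tendsto' hI fun n => (hI₀ n).1,
    fun l => (hI_anti.le_of_tendsto hI (l + 1)).trans (by rw [hI_succ]; exact inf_le_right), ?_⟩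
  rw [sub_sub_cancel]
  refine le_of_tendsto' (hL.absVal f (fun n => sub_nonneg.2 (hI₀ n).2)
    (ge_of_tendsto' hL fun n => sub_nonneg.2 (hI₀ n).2)) fun n => ?_
  calc absVal f (u - I n) ≤ absVal f (∑ l ∈ Finset.range n, (u - p l)) :=
        absVal_mono f (sub_nonneg.2 (hI₀ n).2) (hI_sum n)
    _ = ∑ l ∈ Finset.range n, absVal f (u - p l) :=
        absVal_sum f _ fun l _ => sub_nonneg.2 (hpu l)
    _ ≤ β := hβ n

variable {h : ℕ → E →L[ℝ] ℝ}

lemma exists_separating (hu : DisjointNullBelow u) (hu₀ : 0 ≤ u)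
    (hh : Pairwise (fun k l => FunDisjoint (h k) (h l))) {δ : ℝ} (hδ : 0 < δ) :
    ∃ c : ℕ → E, (∀ k, 0 ≤ c k ∧ c k ≤ u) ∧ (∀ k, absVal (h k) (u - c k) ≤ δ / 4) ∧
      ∀ k l, k ≠ l → absVal (h l) (c k) ≤ δ / 8 * (1 / 2) ^ (k + l) := by
  have hsplit : ∀ k l, k ≠ l → ∃ y, 0 ≤ y ∧ y ≤ u ∧
      absVal (h k) y + absVal (h l) (u - y) < δ / 8 * (1 / 2) ^ (k + l) := fun k l hkl =>
    (hh hkl).exists_absVal_add_lt hu₀ (by positivity)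
  choose! S hS₀ hSu hS using hsplit
  set p : ℕ → ℕ → E := fun k l => if l = k then u else u - S k l
  have hp : ∀ k l, 0 ≤ p k l ∧ p k l ≤ u := fun k l => by
    by_cases hlk : l = k
    · simp [p, hlk, hu₀]
    · simp only [p, if_neg hlk]
      exact ⟨sub_nonneg.2 (hSu k l (Ne.symm hlk)), sub_le_self _ (hS₀ k l (Ne.symm hlk))⟩
  have hc : ∀ k, ∃ c, 0 ≤ c ∧ (∀ l, c ≤ p k l) ∧ absVal (h k) (u - c) ≤ δ / 4 := fun k =>
    hu.exists_le_absVal_sub_le (fun l => (hp k l).1) (fun l => (hp k l).2) (h k) fun n => by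
      refine (Finset.sum_le_sum fun l _ => ?_).trans
        ((sum_range_mul_half_pow_add_le (c := δ / 8) (by positivity) k n).trans_eq (by ring))
      by_cases hlk : l = k
      · simp [p, hlk, absVal_zero]; positivity
      · simp only [p, if_neg hlk, sub_sub_cancel]
        exact (le_add_of_nonneg_right
          (absVal_nonneg _ (sub_nonneg.2 (hSu k l (Ne.symm hlk))))).trans (hS k l (Ne.symm hlk)).le
  choose c hc₀ hcp hcu using hc
  refine ⟨c, fun k => ⟨hc₀ k, by simpa [p] using hcp k k⟩, hcu, fun k l hkl => ?_⟩
  calc absVal (h l) (c k) ≤ absVal (h l) (u - S k l) := by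
        simpa [p, Ne.symm hkl] using absVal_mono (h l) (hc₀ k) (hcp k l)
    _ ≤ δ / 8 * (1 / 2) ^ (k + l) :=
        (le_add_of_nonneg_left (absVal_nonneg _ (hS₀ k l hkl))).trans (hS k l hkl).le

lemma exists_pairwise_disjoint_of_separating (hu : DisjointNullBelow u) {δ : ℝ} (hδ : 0 < δ)
    {c : ℕ → E} (hc : ∀ k, 0 ≤ c k ∧ c k ≤ u)
    (hcross : ∀ k l, k ≠ l → absVal (h l) (c k) ≤ δ / 8 * (1 / 2) ^ (k + l)) :
    ∃ z : ℕ → E, (∀ k, 0 ≤ z k ∧ z k ≤ c k) ∧ Pairwise (fun k l => z k ⊓ z l = 0) ∧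
      ∀ k, absVal (h k) (c k - z k) ≤ δ / 4 := by
  set p : ℕ → ℕ → E := fun k l => if l = k then c k else (c k - c l)⁺
  have hp : ∀ k l, 0 ≤ p k l ∧ p k l ≤ c k := fun k l => by
    by_cases hlk : l = k
    · simp [p, hlk, (hc k).1]
    · simp only [p, if_neg hlk]
      exact ⟨posPart_nonneg _, sup_le (sub_le_self _ (hc l).1) (hc k).1⟩
  have hz : ∀ k, ∃ z, 0 ≤ z ∧ (∀ l, z ≤ p k l) ∧ absVal (h k) (c k - z) ≤ δ / 4 := fun k =>
    (hu.mono (hc k).2).exists_le_absVal_sub_le (fun l => (hp k l).1) (fun l => (hp k l).2) (h k)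
      fun n => by
        refine (Finset.sum_le_sum fun l _ => ?_).trans
          ((sum_range_mul_half_pow_add_le (c := δ / 8) (by positivity) k n).trans_eq (by ring))
        by_cases hlk : l = k
        · simp [p, hlk, absVal_zero]; positivity
        · simp only [p, if_neg hlk]
          rw [← inf_eq_sub_posPart_sub, add_comm]
          exact (absVal_mono _ (le_inf (hc k).1 (hc l).1) inf_le_right).trans (hcross l k hlk)
  choose z hz₀ hzp hzc using hz
  refine ⟨z, fun k => ⟨hz₀ k, by simpa [p] using hzp k k⟩, fun k l hkl => ?_, hzc⟩
  have hk : z k ≤ (c k - c l)⁺ := by simpa [p, Ne.symm hkl] using hzp k l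
  have hl : z l ≤ (c l - c k)⁺ := by simpa [p, hkl] using hzp l k
  exact le_antisymm ((inf_le_inf hk hl).trans_eq (posPart_inf_posPart_sub_swap _ _))
    (le_inf (hz₀ k) (hz₀ l))

lemma tendsto_absVal (hu : DisjointNullBelow u) (hu₀ : 0 ≤ u) {f : ℕ → E →L[ℝ] ℝ}
    (hf : Pairwise (fun m n => FunDisjoint (f m) (f n))) {M : ℝ} (hM : ∀ n, ‖f n‖ ≤ M) :
    Tendsto (fun n => absVal (f n) u) atTop (𝓝 0) := by
  by_contra hcon
  rw [Metric.tendsto_atTop] at hcon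
  push Not at hcon
  obtain ⟨δ, hδ, hfar⟩ := hcon
  have hfreq : ∃ᶠ n in atTop, δ ≤ absVal (f n) u := frequently_atTop.2 fun N => by
    obtain ⟨n, hn, hdist⟩ := hfar N
    rw [Real.dist_eq, sub_zero, abs_of_nonneg (absVal_nonneg _ hu₀)] at hdist
    exact ⟨n, hn, hdist⟩
  obtain ⟨φ, hφ, hφδ⟩ := extraction_of_frequently_atTop hfreq
  obtain ⟨c, hc, hcu, hcross⟩ := hu.exists_separating hu₀ (h := fun k => f (φ k))
    (fun k l hkl => hf (hφ.injective.ne hkl)) hδ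
  obtain ⟨z, hz, hzd, hzc⟩ := hu.exists_pairwise_disjoint_of_separating hδ hc hcross
  have hlow : ∀ k, δ / 2 ≤ M * ‖z k‖ := fun k => by
    have hsplit : absVal (f (φ k)) u =
        absVal (f (φ k)) (z k) + absVal (f (φ k)) (c k - z k) + absVal (f (φ k)) (u - c k) := by
      rw [← absVal_add _ (hz k).1 (sub_nonneg.2 (hz k).2), add_sub_cancel,
        ← absVal_add _ (hc k).1 (sub_nonneg.2 (hc k).2), add_sub_cancel]
    have hzM : absVal (f (φ k)) (z k) ≤ M * ‖z k‖ := (absVal_le_opNorm_mul_norm _ (hz k).1).trans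
      (mul_le_mul_of_nonneg_right (hM _) (norm_nonneg _))
    linarith [hφδ k, hcu k, hzc k]
  have hzn : Tendsto (fun k => M * ‖z k‖) atTop (𝓝 0) := by
    simpa using (hu z (fun k => (hz k).1) (fun k => (hz k).2.trans (hc k).2) hzd).const_mul M
  obtain ⟨k, hk⟩ := (hzn.eventually_lt_const (half_pos hδ)).exists
  linarith [hlow k]

end DisjointNullBelow

section AlmostDisjoint

variable {E : Type*} [NormedAddCommGroup E] [Lattice E] [HasSolidNorm E] [IsOrderedAddMonoid E]

lemma nsmul_norm_inf_posPart_sub_nsmul_le [NormedSpace ℝ E] (n : ℕ) {a b : E} (ha : 0 ≤ a)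
    (hb : 0 ≤ b) : n * ‖a ⊓ (b - n • a)⁺‖ ≤ ‖b‖ := by
  have hq : 0 ≤ a ⊓ (b - n • a)⁺ := le_inf ha (posPart_nonneg _)
  calc n * ‖a ⊓ (b - n • a)⁺‖ = ‖n • (a ⊓ (b - n • a)⁺)‖ := by
        rw [RCLike.norm_nsmul ℝ, nsmul_eq_mul]
    _ ≤ ‖b‖ :=
        norm_le_norm_of_nonneg_of_le (nsmul_nonneg hq n) (nsmul_inf_posPart_sub_nsmul_le n hb)

/-- `d k` is `b k` minus its overlaps with all the other terms. -/
lemma exists_pairwise_disjoint_of_norm_inf_le [CompleteSpace E] {b : ℕ → E} (hb : ∀ k, 0 ≤ b k)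
    {C : ℝ} (h : ∀ m k, m ≠ k → ‖b m ⊓ b k‖ ≤ C * (1 / 2) ^ (m + k)) :
    ∃ d : ℕ → E, (∀ k, 0 ≤ d k ∧ d k ≤ b k) ∧ Pairwise (fun m k => d m ⊓ d k = 0) ∧
      ∀ k, ‖b k‖ ≤ ‖d k‖ + 2 * C * (1 / 2) ^ k := by
  have hC : 0 ≤ C := by
    have := (norm_nonneg _).trans (h 0 1 zero_ne_one)
    norm_num at this
    linarith
  set o : ℕ → ℕ → E := fun k m => if m = k then 0 else b m ⊓ b k
  have ho₀ : ∀ k m, 0 ≤ o k m := fun k m => by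
    by_cases hmk : m = k
    · simp [o, hmk]
    · simpa [o, hmk] using le_inf (hb m) (hb k)
  have ho : ∀ k m, ‖o k m‖ ≤ C * (1 / 2) ^ k * (1 / 2) ^ m := fun k m => by
    by_cases hmk : m = k
    · simp only [o, if_pos hmk, norm_zero]
      positivity
    · calc ‖o k m‖ = ‖b m ⊓ b k‖ := by simp only [o, if_neg hmk]
        _ ≤ C * (1 / 2) ^ (m + k) := h m k hmk
        _ = C * (1 / 2) ^ k * (1 / 2) ^ m := by ring
  have hgeom : ∀ k, HasSum (fun m => C * (1 / 2) ^ k * (1 / 2) ^ m) (2 * C * (1 / 2) ^ k) :=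
    fun k => by
      rw [show 2 * C * (1 / 2) ^ k = C * (1 / 2) ^ k * 2 by ring]
      exact hasSum_geometric_two.mul_left _
  set e : ℕ → E := fun k => ∑' m, o k m
  have he₀ : ∀ k, 0 ≤ e k := fun k => tsum_nonneg (ho₀ k)
  have hoe : ∀ m k, m ≠ k → b m ⊓ b k ≤ e k := fun m k hmk => by
    have := ((hgeom k).summable.of_norm_bounded (ho k)).le_tsum m fun j _ => ho₀ k j
    rwa [show o k m = b m ⊓ b k from if_neg hmk] at this
  refine ⟨fun k => (b k - e k)⁺, fun k => ⟨posPart_nonneg _, sup_le (sub_le_self _ (he₀ k)) (hb k)⟩,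
    fun m k hmk => ?_, fun k => ?_⟩
  · have hle : ∀ m k, m ≠ k → (b k - e k)⁺ ≤ (b k - b m)⁺ := fun m k hmk =>
      sup_le ((sub_le_sub_left (hoe m k hmk) _).trans_eq (by rw [inf_comm, inf_eq_sub_posPart_sub,
        sub_sub_cancel])) (posPart_nonneg _)
    exact le_antisymm ((inf_le_inf (hle k m hmk.symm) (hle m k hmk)).trans_eq
      (posPart_inf_posPart_sub_swap _ _)) (le_inf (posPart_nonneg _) (posPart_nonneg _))
  · calc ‖b k‖ ≤ ‖(b k - e k)⁺ + e k‖ :=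
          norm_le_norm_of_nonneg_of_le (hb k) (sub_le_iff_le_add.1 (le_posPart _))
      _ ≤ ‖(b k - e k)⁺‖ + ‖e k‖ := norm_add_le _ _
      _ ≤ ‖(b k - e k)⁺‖ + 2 * C * (1 / 2) ^ k :=
          add_le_add le_rfl (tsum_of_norm_bounded (hgeom k) (ho k))

end AlmostDisjoint

lemma WeakStarNull.exists_norm_le {E : Type*} [NormedAddCommGroup E] [NormedSpace ℝ E]
    [CompleteSpace E] {f : ℕ → E →L[ℝ] ℝ} (hf : WeakStarNull f) : ∃ M, ∀ n, ‖f n‖ ≤ M :=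
  banach_steinhaus fun x =>
    let ⟨C, hC⟩ := (hf x).norm.bddAbove_range
    ⟨C, fun n => hC ⟨n, rfl⟩⟩

lemma exists_seq_lt_norm_posPart_abs_sub {E : Type*} [NormedAddCommGroup E] [Lattice E]
    {A : Set E} {ε : ℝ}
    (h : ∀ v ∈ AddSubmonoid.closure (abs '' A), ∃ a ∈ A, ε < ‖(|a| - v)⁺‖) :
    ∃ x : ℕ → E, (∀ k, x k ∈ A) ∧
      ∀ k, ε < ‖(|x k| - (4 ^ (k + 1) : ℕ) • ∑ i ∈ Finset.range k, |x i|)⁺‖ := by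
  choose! W hWA hW using h
  set σ : ℕ → E := fun k => Nat.rec 0 (fun k s => s + |W ((4 ^ (k + 1) : ℕ) • s)|) k
  have hσ : ∀ k, σ k ∈ AddSubmonoid.closure (abs '' A) := fun k => by
    induction k with
    | zero => exact zero_mem _
    | succ k ih =>
      exact add_mem ih (AddSubmonoid.subset_closure ⟨_, hWA _ (nsmul_mem ih _), rfl⟩)
  set x : ℕ → E := fun k => W ((4 ^ (k + 1) : ℕ) • σ k)
  have hσx : ∀ k, σ k = ∑ i ∈ Finset.range k, |x i| := fun k => by
    induction k with
    | zero => rfl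
    | succ k ih => rw [Finset.sum_range_succ, ← ih]
  exact ⟨x, fun k => hWA _ (nsmul_mem (hσ k) _), fun k => hσx k ▸ hW _ (nsmul_mem (hσ k) _)⟩

namespace LWeaklyCompact

variable {E : Type*} [NormedAddCommGroup E] [Lattice E] [HasSolidNorm E] [IsOrderedAddMonoid E]
  [CompleteSpace E] {A : Set E}

lemma tendsto_norm_of_norm_inf_le (hA : LWeaklyCompact A) {b : ℕ → E} (hb : ∀ k, 0 ≤ b k)
    (hbA : ∀ k, b k ∈ SolidHull A) {C : ℝ}
    (h : ∀ m k, m ≠ k → ‖b m ⊓ b k‖ ≤ C * (1 / 2) ^ (m + k)) :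
    Tendsto (fun k => ‖b k‖) atTop (𝓝 0) := by
  obtain ⟨d, hd, hdd, hbd⟩ := exists_pairwise_disjoint_of_norm_inf_le hb h
  have hdA : ∀ k, d k ∈ SolidHull A := fun k => by
    obtain ⟨x, hx, hbx⟩ := hbA k
    exact ⟨x, hx, by rw [abs_of_nonneg (hd k).1]; exact (hd k).2.trans ((le_abs_self _).trans hbx)⟩
  have hd0 := hA.2 d hdA fun m k hmk => by
    simpa [ElemDisjoint, abs_of_nonneg (hd m).1, abs_of_nonneg (hd k).1] using hdd hmk
  have hgeom : Tendsto (fun k : ℕ => 2 * C * (1 / 2) ^ k) atTop (𝓝 0) := by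
    simpa using (tendsto_pow_atTop_nhds_zero_of_lt_one (by norm_num : (0 : ℝ) ≤ 1 / 2)
      (by norm_num)).const_mul (2 * C)
  exact squeeze_zero (fun k => norm_nonneg _) hbd (by simpa using hd0.add hgeom)

variable [NormedSpace ℝ E]

/-- Meyer-Nieberg's approximation: up to `ε` in norm, `A` lies in an order interval `[-u, u]`
whose positive part is L-weakly compact. -/
lemma exists_norm_posPart_abs_sub_le (hA : LWeaklyCompact A) {ε : ℝ} (hε : 0 < ε) :
    ∃ u, 0 ≤ u ∧ DisjointNullBelow u ∧ ∀ a ∈ A, ‖(|a| - u)⁺‖ ≤ ε := by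
  by_contra! hne
  obtain ⟨x, hxA, hx⟩ := exists_seq_lt_norm_posPart_abs_sub fun v hv =>
    hne v (hA.disjointNullBelow_of_mem_closure hv).1 (hA.disjointNullBelow_of_mem_closure hv).2
  obtain ⟨C, hC⟩ := isBounded_iff_forall_norm_le.1 hA.1
  set b : ℕ → E := fun k => (|x k| - (4 ^ (k + 1) : ℕ) • ∑ i ∈ Finset.range k, |x i|)⁺
  have hσ₀ : ∀ k, 0 ≤ ∑ i ∈ Finset.range k, |x i| := fun k =>
    Finset.sum_nonneg fun i _ => abs_nonneg _
  have hbx : ∀ k, b k ≤ |x k| := fun k =>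
    sup_le (sub_le_self _ (nsmul_nonneg (hσ₀ k) _)) (abs_nonneg _)
  -- `b k` lies above `4 ^ (k + 1)` copies of each earlier `|x m|`, so it barely meets `b m`.
  have hlt : ∀ m k, m < k → ‖b m ⊓ b k‖ ≤ C * (1 / 2) ^ (m + k) := fun m k hmk => by
    have hxm : |x m| ≤ ∑ i ∈ Finset.range k, |x i| :=
      Finset.single_le_sum (f := fun i => |x i|) (fun i _ => abs_nonneg _) (Finset.mem_range.2 hmk)
    have hle : b m ⊓ b k ≤ |x m| ⊓ (|x k| - (4 ^ (k + 1) : ℕ) • |x m|)⁺ :=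
      inf_le_inf (hbx m) (sup_le_sup_right (sub_le_sub_left (nsmul_le_nsmul_right hxm _) _) 0)
    have hK := nsmul_norm_inf_posPart_sub_nsmul_le (4 ^ (k + 1)) (abs_nonneg (x m))
      (abs_nonneg (x k))
    have hpow : (1 / 4 : ℝ) ^ (k + 1) ≤ (1 / 2) ^ (m + k) := by
      rw [show (1 / 4 : ℝ) = (1 / 2) ^ 2 by norm_num, ← pow_mul]
      exact pow_le_pow_of_le_one (by norm_num) (by norm_num) (by omega)
    rw [norm_abs_eq_norm] at hK
    have hC' := hC _ (hxA k)
    calc ‖b m ⊓ b k‖ ≤ ‖|x m| ⊓ (|x k| - (4 ^ (k + 1) : ℕ) • |x m|)⁺‖ :=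
          norm_le_norm_of_nonneg_of_le (le_inf (posPart_nonneg _) (posPart_nonneg _)) hle
      _ ≤ C * (1 / 4) ^ (k + 1) := by
          rw [one_div, inv_pow, ← div_eq_mul_inv, le_div_iff₀ (by positivity), mul_comm]
          push_cast at hK; linarith
      _ ≤ C * (1 / 2) ^ (m + k) := mul_le_mul_of_nonneg_left hpow ((norm_nonneg _).trans hC')
  have hb0 := hA.tendsto_norm_of_norm_inf_le (b := b) (fun k => posPart_nonneg _)
    (fun k => ⟨x k, hxA k, by rw [abs_of_nonneg (posPart_nonneg _)]; exact hbx k⟩)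
    (C := C) fun m k hmk => by
      rcases hmk.lt_or_gt with h | h
      · exact hlt m k h
      · rw [inf_comm, add_comm]; exact hlt k m h
  obtain ⟨k, hk⟩ := (hb0.eventually_lt_const hε).exists
  exact (hx k).not_gt hk

lemma eventually_forall_abs_apply_lt (hA : LWeaklyCompact A) {f : ℕ → E →L[ℝ] ℝ}
    (hf : Pairwise (fun m n => FunDisjoint (f m) (f n))) {M : ℝ} (hM : ∀ n, ‖f n‖ ≤ M) {ε : ℝ}
    (hε : 0 < ε) : ∀ᶠ n in atTop, ∀ x ∈ A, |f n x| < ε := by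
  have hM₀ : 0 ≤ M := (norm_nonneg _).trans (hM 0)
  obtain ⟨u, hu₀, hu, hAu⟩ := hA.exists_norm_posPart_abs_sub_le (ε := ε / (2 * (M + 1)))
    (by positivity)
  have hMε : M * (ε / (2 * (M + 1))) ≤ ε / 2 := by
    rw [mul_div_assoc', div_le_div_iff₀ (by positivity) (by positivity)]
    nlinarith
  filter_upwards [(hu.tendsto_absVal hu₀ hf hM).eventually_lt_const (half_pos hε)] with n hn x hx
  calc |f n x| ≤ absVal (f n) u + ‖f n‖ * ‖(|x| - u)⁺‖ := abs_apply_le_absVal_add _ hu₀ x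
    _ ≤ absVal (f n) u + M * (ε / (2 * (M + 1))) :=
        add_le_add le_rfl (mul_le_mul (hM n) (hAu x hx) (norm_nonneg _) hM₀)
    _ < ε := by linarith

end LWeaklyCompact

/-- Every L-weakly compact subset of a Banach lattice is almost limited. -/
theorem stmt6 {E : Type*} [NormedAddCommGroup E] [Lattice E] [HasSolidNorm E] [IsOrderedAddMonoid E] [NormedSpace ℝ E] [CompleteSpace E]
    (A : Set E) (hA : LWeaklyCompact A) :
    AlmostLimited A := by
  refine ⟨hA.1, fun f hf hw ε hε => ?_⟩
  obtain ⟨M, hM⟩ := hw.exists_norm_le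
  exact hA.eventually_forall_abs_apply_lt hf hM hε
end

section
/- If every almost L-set in E* is L-weakly compact, then E* has order continuous norm. -/
/-!
If the norm of `E*` is not order continuous, there is a downward directed family `A` of positive
functionals with infimum `0` and an `ε > 0` with `ε ≤ ‖f‖` on `A`. As the pointwise infimum of `A`
vanishes, one can descend in `A` to `F 0 ≥ F 1 ≥ ⋯` with positive unit vectors `X n` such that
`F n (X n) > ε / 2` while `F (n + 1) (X n)` is tiny. Band components with respect to the increasing
functionals `(δ • F 0 - F n)⁺` cut out of the `F n` pairwise disjoint pieces `g n ≤ F 0` with still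
`g n (X n) > ε / 4`. A singleton `{F 0}` is an almost L-set, so by hypothesis it is L-weakly compact,
and the disjoint sequence `g n` in its solid hull must be norm null: a contradiction.
-/

open Filter Topology

lemma norm_le_norm_of_nonneg_of_le_s9 {α : Type*} [NormedAddCommGroup α] [Lattice α] [HasSolidNorm α]
    [IsOrderedAddMonoid α] {x y : α} (hx : 0 ≤ x) (hxy : x ≤ y) : ‖x‖ ≤ ‖y‖ :=
  norm_le_norm_of_abs_le_abs <| by rwa [abs_of_nonneg hx, abs_of_nonneg (hx.trans hxy)]

lemma exists_add_eq_of_le_add {α : Type*} [AddCommGroup α] [Lattice α] [IsOrderedAddMonoid α]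
    {x y z : α} (hx : 0 ≤ x) (hy : 0 ≤ y) (hz : 0 ≤ z) (h : z ≤ x + y) :
    ∃ u v : α, 0 ≤ u ∧ u ≤ x ∧ 0 ≤ v ∧ v ≤ y ∧ z = u + v := by
  refine ⟨z ⊓ x, z - z ⊓ x, le_inf hz hx, inf_le_right, sub_nonneg.mpr inf_le_left, ?_, by abel⟩
  rw [sub_inf, sub_self]
  exact sup_le hy (sub_le_iff_le_add'.mpr h)

lemma ciSup_add_of_monotone {a b : ℕ → ℝ} (ha : Monotone a) (ha' : BddAbove (Set.range a))
    (hb : Monotone b) (hb' : BddAbove (Set.range b)) :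
    ⨆ j, (a j + b j) = (⨆ j, a j) + ⨆ j, b j := by
  obtain ⟨A, hA⟩ := ha'
  obtain ⟨B, hB⟩ := hb'
  have hab : BddAbove (Set.range fun j => a j + b j) :=
    ⟨A + B, by rintro _ ⟨j, rfl⟩; exact add_le_add (hA ⟨j, rfl⟩) (hB ⟨j, rfl⟩)⟩
  exact tendsto_nhds_unique (tendsto_atTop_ciSup (ha.add hb) hab)
    ((tendsto_atTop_ciSup ha ⟨A, hA⟩).add (tendsto_atTop_ciSup hb ⟨B, hB⟩))

section DualOrderContinuity

variable {E : Type*} [NormedAddCommGroup E] [Lattice E] [NormedSpace ℝ E]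

namespace FunLe

variable {f g h : E →L[ℝ] ℝ}

lemma apply_nonneg (hf : FunLe 0 f) {x : E} (hx : 0 ≤ x) : 0 ≤ f x := hf x hx

lemma trans (hfg : FunLe f g) (hgh : FunLe g h) : FunLe f h :=
  fun x hx => (hfg x hx).trans (hgh x hx)

lemma nonneg_sub (hfg : FunLe f g) : FunLe 0 (g - f) :=
  fun x hx => by simpa using hfg x hx

lemma smul_le_smul {w w' : E →L[ℝ] ℝ} (hw : FunLe 0 w) (hww' : FunLe w w') {i j : ℝ}
    (hi : 0 ≤ i) (hij : i ≤ j) : FunLe (i • w) (j • w') := fun x hx => by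
  simpa using mul_le_mul hij (hww' x hx) (hw.apply_nonneg hx) (hi.trans hij)

end FunLe

lemma funLe_of_antitone {F : ℕ → E →L[ℝ] ℝ} (hF : ∀ n, FunLe (F (n + 1)) (F n)) {k m : ℕ}
    (hkm : k ≤ m) : FunLe (F m) (F k) := by
  induction m, hkm using Nat.le_induction with
  | base => exact fun _ _ => le_rfl
  | succ m _ ih => exact (hF m).trans ih

lemma exists_antitone_seq {A : Set (E →L[ℝ] ℝ)} {f₀ : E →L[ℝ] ℝ} (hf₀ : f₀ ∈ A) {c η : ℝ}
    (hnext : ∀ f ∈ A, ∀ x : E, 0 ≤ x → ∃ g ∈ A, FunLe g f ∧ g x < η)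
    (hlarge : ∀ f ∈ A, ∃ x : E, 0 ≤ x ∧ ‖x‖ ≤ 1 ∧ c < f x) :
    ∃ (F : ℕ → E →L[ℝ] ℝ) (X : ℕ → E), F 0 = f₀ ∧ (∀ n, F n ∈ A) ∧
      (∀ n, FunLe (F (n + 1)) (F n)) ∧ (∀ n, 0 ≤ X n ∧ ‖X n‖ ≤ 1 ∧ c < F n (X n)) ∧
      ∀ n, F (n + 1) (X n) < η := by
  choose X hX using hlarge
  choose next hnextA hnextle hnextlt using hnext
  let step : A → A := fun f => ⟨next f.1 f.2 (X f.1 f.2) (hX f.1 f.2).1, hnextA _ _ _ _⟩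
  let F : ℕ → A := fun n => step^[n] ⟨f₀, hf₀⟩
  have hF : ∀ n, F (n + 1) = step (F n) := fun n => Function.iterate_succ_apply' step n _
  refine ⟨fun n => (F n).1, fun n => X (F n).1 (F n).2, rfl, fun n => (F n).2,
    fun n => ?_, fun n => hX _ _, fun n => ?_⟩
  · simp only [hF]; exact hnextle _ _ _ _
  · simp only [hF]; exact hnextlt _ _ _ _

lemma apply_le_norm_of_norm_le_one {F : Type*} [SeminormedAddCommGroup F] [NormedSpace ℝ F]
    (f : F →L[ℝ] ℝ) {x : F} (hx : ‖x‖ ≤ 1) : f x ≤ ‖f‖ :=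
  (le_abs_self _).trans <| by simpa using f.le_opNorm_of_le hx

lemma almostLSet_singleton (f : E →L[ℝ] ℝ) : AlmostLSet {f} := by
  refine ⟨Bornology.isBounded_singleton, fun x _ hx ε hε => ?_⟩
  filter_upwards [(hx f).eventually (Metric.ball_mem_nhds 0 hε)] with n hn g hg
  rw [Set.mem_singleton_iff.mp hg]
  simpa using hn

section PosValBasic

variable {φ : E →L[ℝ] ℝ} {x : E} {c : ℝ}

lemma posVal_le (hx : 0 ≤ x) (h : ∀ y, 0 ≤ y → y ≤ x → φ y ≤ c) : posVal φ x ≤ c :=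
  csSup_le ⟨_, 0, ⟨le_rfl, hx⟩, rfl⟩ <| by
    rintro _ ⟨y, ⟨hy0, hyx⟩, rfl⟩
    exact h y hy0 hyx

lemma exists_lt_of_lt_posVal (hx : 0 ≤ x) (hc : c < posVal φ x) :
    ∃ y, 0 ≤ y ∧ y ≤ x ∧ c < φ y := by
  have hne : ((fun y => φ y) '' {y | 0 ≤ y ∧ y ≤ x}).Nonempty := ⟨_, 0, ⟨le_rfl, hx⟩, rfl⟩
  obtain ⟨_, ⟨y, ⟨hy0, hyx⟩, rfl⟩, hy⟩ := exists_lt_of_lt_csSup hne hc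
  exact ⟨y, hy0, hyx, hy⟩

end PosValBasic

variable [IsOrderedAddMonoid E]

lemma FunLe.apply_mono {f : E →L[ℝ] ℝ} (hf : FunLe 0 f) {x y : E} (hxy : x ≤ y) :
    f x ≤ f y := by
  simpa using hf.apply_nonneg (sub_nonneg.mpr hxy)

lemma FunLe.abs_apply_le {f : E →L[ℝ] ℝ} (hf : FunLe 0 f) (x : E) : |f x| ≤ f |x| :=
  abs_le.mpr ⟨neg_le.mp (by simpa using hf.apply_mono (neg_le_abs x)),
    hf.apply_mono (le_abs_self x)⟩

lemma absVal_eq_apply {f : E →L[ℝ] ℝ} (hf : FunLe 0 f) {x : E} (hx : 0 ≤ x) :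
    absVal f x = f x := by
  have hle : ∀ y : E, |y| ≤ x → f y ≤ f x := fun y hy =>
    (hf.apply_mono (le_abs_self y)).trans (hf.apply_mono hy)
  refine le_antisymm (csSup_le ⟨f x, x, by simp [abs_of_nonneg hx], rfl⟩ ?_)
    (le_csSup ⟨f x, ?_⟩ ⟨x, by simp [abs_of_nonneg hx], rfl⟩) <;>
  · rintro _ ⟨y, hy, rfl⟩
    exact hle y hy

lemma mem_dualSolidHull_singleton {f g : E →L[ℝ] ℝ} (hf : FunLe 0 f) (hg : FunLe 0 g)
    (hgf : FunLe g f) : g ∈ DualSolidHull {f} :=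
  ⟨f, rfl, fun x hx => by rw [absVal_eq_apply hg hx, absVal_eq_apply hf hx]; exact hgf x hx⟩

lemma FunDisjoint.symm {f g : E →L[ℝ] ℝ} (h : FunDisjoint f g) : FunDisjoint g f := by
  intro x hx
  convert h x hx using 2
  ext r
  constructor <;>
  · rintro ⟨y, ⟨hy, hyx⟩, rfl⟩
    exact ⟨x - y, ⟨sub_nonneg.mpr hyx, sub_le_self x hy⟩, by simp [add_comm]⟩

lemma funDisjoint_of_forall_exists {u v : E →L[ℝ] ℝ} (hu : FunLe 0 u) (hv : FunLe 0 v)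
    (h : ∀ x : E, 0 ≤ x → ∀ η > 0, ∃ z, 0 ≤ z ∧ z ≤ x ∧ u z + v (x - z) < η) :
    FunDisjoint u v := by
  intro x hx
  have hval : ∀ y ∈ {y : E | 0 ≤ y ∧ y ≤ x},
      absVal u y + absVal v (x - y) = u y + v (x - y) := fun y ⟨hy, hyx⟩ => by
    rw [absVal_eq_apply hu hy, absVal_eq_apply hv (sub_nonneg.mpr hyx)]
  have hnonneg :
      ∀ r ∈ (fun y => absVal u y + absVal v (x - y)) '' {y | 0 ≤ y ∧ y ≤ x}, 0 ≤ r := by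
    rintro _ ⟨y, hy, rfl⟩
    dsimp only
    rw [hval y hy]
    exact add_nonneg (hu.apply_nonneg hy.1) (hv.apply_nonneg (sub_nonneg.mpr hy.2))
  refine le_antisymm (le_of_forall_pos_le_add fun η hη => ?_) (Real.sInf_nonneg hnonneg)
  obtain ⟨z, hz, hzx, hzη⟩ := h x hx η hη
  have := csInf_le ⟨0, hnonneg⟩ ⟨z, ⟨hz, hzx⟩, rfl⟩
  dsimp only at this
  rw [hval z ⟨hz, hzx⟩] at this
  linarith

variable [HasSolidNorm E]

lemma exists_nonneg_norm_le_one_lt_apply {f : E →L[ℝ] ℝ} (hf : FunLe 0 f) {c : ℝ}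
    (hc : c < ‖f‖) : ∃ x : E, 0 ≤ x ∧ ‖x‖ ≤ 1 ∧ c < f x := by
  obtain ⟨x, hx, hcx⟩ := f.exists_lt_apply_of_lt_opNorm hc
  refine ⟨|x|, abs_nonneg x, by rw [norm_abs_eq_norm]; exact hx.le, ?_⟩
  rw [Real.norm_eq_abs] at hcx
  exact hcx.trans_le (hf.abs_apply_le x)

lemma exists_clm_eqOn_nonneg (p : E → ℝ) (C : ℝ)
    (hadd : ∀ x y : E, 0 ≤ x → 0 ≤ y → p (x + y) = p x + p y)
    (hbdd : ∀ x : E, 0 ≤ x → |p x| ≤ C * ‖x‖) :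
    ∃ Φ : E →L[ℝ] ℝ, ∀ x : E, 0 ≤ x → Φ x = p x := by
  have hdiff : ∀ a b c d : E, 0 ≤ a → 0 ≤ b → 0 ≤ c → 0 ≤ d → a - b = c - d →
      p a - p b = p c - p d := by
    intro a b c d ha hb hc hd h
    have := congrArg p (sub_eq_sub_iff_add_eq_add.mp h)
    rw [hadd _ _ ha hd, hadd _ _ hc hb] at this
    linarith
  have hnorm_le : ∀ {x y : E}, 0 ≤ x → x ≤ |y| → |p x| ≤ |C| * ‖y‖ := fun hx hxy =>
    (hbdd _ hx).trans <| mul_le_mul (le_abs_self C)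
      ((norm_le_norm_of_nonneg_of_le_s9 hx hxy).trans_eq (norm_abs_eq_norm _))
      (norm_nonneg _) (abs_nonneg C)
  let q : E →+ ℝ := AddMonoidHom.mk' (fun x => p x⁺ - p x⁻) fun a b => by
    rw [hdiff _ _ (a⁺ + b⁺) (a⁻ + b⁻) (posPart_nonneg _) (negPart_nonneg _)
      (add_nonneg (posPart_nonneg _) (posPart_nonneg _))
      (add_nonneg (negPart_nonneg _) (negPart_nonneg _))
      (by rw [posPart_sub_negPart, add_sub_add_comm, posPart_sub_negPart, posPart_sub_negPart]),
      hadd _ _ (posPart_nonneg _) (posPart_nonneg _),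
      hadd _ _ (negPart_nonneg _) (negPart_nonneg _)]
    ring
  have hq : ∀ x, ‖q x‖ ≤ 2 * |C| * ‖x‖ := fun x =>
    calc ‖q x‖ ≤ |p x⁺| + |p x⁻| := abs_sub _ _
      _ ≤ |C| * ‖x‖ + |C| * ‖x‖ := by
          have hx := posPart_add_negPart x
          exact add_le_add
            (hnorm_le (posPart_nonneg x) (hx ▸ le_add_of_nonneg_right (negPart_nonneg x)))
            (hnorm_le (negPart_nonneg x) (hx ▸ le_add_of_nonneg_left (posPart_nonneg x)))
      _ = 2 * |C| * ‖x‖ := by ring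
  refine ⟨q.toRealLinearMap (AddMonoidHomClass.continuous_of_bound q _ hq), fun x hx => ?_⟩
  have h0 : p 0 = 0 := by simpa using hadd 0 0 le_rfl le_rfl
  simp [q, posPart_eq_self.mpr hx, negPart_eq_zero.mpr hx, h0]

section PosVal

variable {φ ψ : E →L[ℝ] ℝ} {x y : E} {c : ℝ}

lemma apply_le_norm_mul (φ : E →L[ℝ] ℝ) (hy : 0 ≤ y) (hyx : y ≤ x) : φ y ≤ ‖φ‖ * ‖x‖ :=
  (le_abs_self _).trans (φ.le_opNorm_of_le (norm_le_norm_of_nonneg_of_le_s9 hy hyx))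

lemma bddAbove_posVal_image (φ : E →L[ℝ] ℝ) (x : E) :
    BddAbove ((fun y => φ y) '' {y | 0 ≤ y ∧ y ≤ x}) :=
  ⟨‖φ‖ * ‖x‖, by
    rintro _ ⟨y, ⟨hy0, hyx⟩, rfl⟩
    exact apply_le_norm_mul φ hy0 hyx⟩

lemma le_posVal (hy : 0 ≤ y) (hyx : y ≤ x) : φ y ≤ posVal φ x :=
  le_csSup (bddAbove_posVal_image φ x) ⟨y, ⟨hy, hyx⟩, rfl⟩

lemma posVal_nonneg (hx : 0 ≤ x) : 0 ≤ posVal φ x := by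
  simpa using le_posVal (φ := φ) le_rfl hx

lemma posVal_mono (hx : 0 ≤ x) (h : ∀ y, 0 ≤ y → y ≤ x → φ y ≤ ψ y) :
    posVal φ x ≤ posVal ψ x :=
  posVal_le hx fun y hy hyx => (h y hy hyx).trans (le_posVal hy hyx)

lemma posVal_le_norm_mul (hx : 0 ≤ x) : posVal φ x ≤ ‖φ‖ * ‖x‖ :=
  posVal_le hx fun _ hy hyx => apply_le_norm_mul φ hy hyx

lemma posVal_eq_apply (hφ : FunLe 0 φ) (hx : 0 ≤ x) : posVal φ x = φ x :=
  le_antisymm (posVal_le hx fun _ _ hyx => hφ.apply_mono hyx) (le_posVal hx le_rfl)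

lemma posVal_add (hx : 0 ≤ x) (hy : 0 ≤ y) : posVal φ (x + y) = posVal φ x + posVal φ y := by
  refine le_antisymm (posVal_le (add_nonneg hx hy) fun z hz hzxy => ?_) ?_
  · obtain ⟨u, v, hu, hux, hv, hvy, rfl⟩ := exists_add_eq_of_le_add hx hy hz hzxy
    rw [map_add]
    exact add_le_add (le_posVal hu hux) (le_posVal hv hvy)
  · rw [← le_sub_iff_add_le]
    refine posVal_le hx fun u hu hux => ?_
    rw [le_sub_iff_add_le', ← le_sub_iff_add_le]
    refine posVal_le hy fun v hv hvy => ?_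
    rw [le_sub_iff_add_le', ← map_add]
    exact le_posVal (add_nonneg hu hv) (add_le_add hux hvy)

end PosVal

lemma exists_posPart (φ : E →L[ℝ] ℝ) : ∃ Φ : E →L[ℝ] ℝ, ∀ x, 0 ≤ x → Φ x = posVal φ x :=
  exists_clm_eqOn_nonneg (posVal φ) ‖φ‖ (fun _ _ hx hy => posVal_add hx hy) fun _ hx => by
    rw [abs_of_nonneg (posVal_nonneg hx)]
    exact posVal_le_norm_mul hx

noncomputable def dualPosPart (φ : E →L[ℝ] ℝ) : E →L[ℝ] ℝ := (exists_posPart φ).choose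

lemma dualPosPart_apply (φ : E →L[ℝ] ℝ) {x : E} (hx : 0 ≤ x) : dualPosPart φ x = posVal φ x :=
  (exists_posPart φ).choose_spec x hx

lemma dualPosPart_nonneg (φ : E →L[ℝ] ℝ) : FunLe 0 (dualPosPart φ) := fun x hx => by
  simpa [dualPosPart_apply φ hx] using posVal_nonneg (φ := φ) hx

lemma le_dualPosPart (φ : E →L[ℝ] ℝ) : FunLe φ (dualPosPart φ) := fun x hx => by
  simpa [dualPosPart_apply φ hx] using le_posVal (φ := φ) hx le_rfl

section DirectedFamily

variable {A : Set (E →L[ℝ] ℝ)}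

/-- By directedness the pointwise infimum of `A` is additive on the positive cone, hence a
functional; as a lower bound of `A` it is then `≤ 0`. -/
lemma exists_mem_apply_lt_of_inf_eq_zero
    (hdir : ∀ f ∈ A, ∀ g ∈ A, ∃ h ∈ A, FunLe h f ∧ FunLe h g)
    (hpos : ∀ f ∈ A, FunLe 0 f) (hglb : ∀ g, (∀ f ∈ A, FunLe g f) → FunLe g 0)
    {f : E →L[ℝ] ℝ} (hf : f ∈ A) {x : E} (hx : 0 ≤ x) {η : ℝ} (hη : 0 < η) :
    ∃ g ∈ A, g x < η := by
  set p : E → ℝ := fun y => sInf ((fun g : E →L[ℝ] ℝ => g y) '' A)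
  have hne : ∀ y : E, ((fun g : E →L[ℝ] ℝ => g y) '' A).Nonempty := fun y => ⟨f y, f, hf, rfl⟩
  have hp_le : ∀ y : E, 0 ≤ y → ∀ g ∈ A, p y ≤ g y := fun y hy g hg =>
    csInf_le ⟨0, by rintro _ ⟨g', hg', rfl⟩; exact (hpos g' hg').apply_nonneg hy⟩ ⟨g, hg, rfl⟩
  have le_p : ∀ y : E, ∀ c : ℝ, (∀ g ∈ A, c ≤ g y) → c ≤ p y := fun y c h =>
    le_csInf (hne y) (by rintro _ ⟨g, hg, rfl⟩; exact h g hg)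
  have hadd : ∀ y z : E, 0 ≤ y → 0 ≤ z → p (y + z) = p y + p z := by
    intro y z hy hz
    refine le_antisymm ?_ (le_p _ _ fun g hg => by
      rw [map_add]; exact add_le_add (hp_le y hy g hg) (hp_le z hz g hg))
    suffices ∀ g₁ ∈ A, p (y + z) - g₁ y ≤ p z by
      linarith [le_p y (p (y + z) - p z) fun g₁ hg₁ => by linarith [this g₁ hg₁]]
    intro g₁ hg₁
    refine le_p z _ fun g₂ hg₂ => ?_
    obtain ⟨h, hh, hh₁, hh₂⟩ := hdir g₁ hg₁ g₂ hg₂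
    have := hp_le _ (add_nonneg hy hz) h hh
    rw [map_add] at this
    linarith [hh₁ y hy, hh₂ z hz]
  obtain ⟨G, hG⟩ := exists_clm_eqOn_nonneg p ‖f‖ hadd fun y hy => by
    rw [abs_of_nonneg (le_p y 0 fun g hg => (hpos g hg).apply_nonneg hy)]
    exact (hp_le y hy f hf).trans (apply_le_norm_mul f hy le_rfl)
  have hpx : p x ≤ 0 := by
    simpa [hG x hx] using hglb G (fun g hg y hy => (hG y hy).trans_le (hp_le y hy g hg)) x hx
  obtain ⟨_, ⟨g, hg, rfl⟩, hgx⟩ := exists_lt_of_csInf_lt (hne x) (hpx.trans_lt hη)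
  exact ⟨g, hg, hgx⟩

lemma exists_funLe_apply_lt (hdir : ∀ f ∈ A, ∀ g ∈ A, ∃ h ∈ A, FunLe h f ∧ FunLe h g)
    (hpos : ∀ f ∈ A, FunLe 0 f) (hglb : ∀ g, (∀ f ∈ A, FunLe g f) → FunLe g 0)
    {f : E →L[ℝ] ℝ} (hf : f ∈ A) {x : E} (hx : 0 ≤ x) {η : ℝ} (hη : 0 < η) :
    ∃ g ∈ A, FunLe g f ∧ g x < η := by
  obtain ⟨f', hf', hf'x⟩ := exists_mem_apply_lt_of_inf_eq_zero hdir hpos hglb hf hx hη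
  obtain ⟨g, hg, hgf, hgf'⟩ := hdir f hf f' hf'
  exact ⟨g, hg, hgf, (hgf' x hx).trans_lt hf'x⟩

end DirectedFamily

lemma posVal_sub_anti {φ u v : E →L[ℝ] ℝ} (huv : FunLe u v) {x : E} (hx : 0 ≤ x) :
    posVal (φ - v) x ≤ posVal (φ - u) x :=
  posVal_mono hx fun y hy _ => by simp only [sub_apply]; linarith [huv y hy]

/-- `P = ⨆ j, φ ⊓ j • w` is the component of `φ` in the band generated by `w`, with the infimum
written out as `φ ⊓ j • w = φ - (φ - j • w)⁺`. -/
def IsBandComponent (w φ P : E →L[ℝ] ℝ) : Prop :=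
  ∀ x : E, 0 ≤ x → P x = ⨆ j : ℕ, (φ x - posVal (φ - (j : ℝ) • w) x)

section BandComponent

variable {w w' φ ψ P Q u v : E →L[ℝ] ℝ} {x : E}

lemma bddAbove_bandTerms (φ w : E →L[ℝ] ℝ) (hx : 0 ≤ x) :
    BddAbove (Set.range fun j : ℕ => φ x - posVal (φ - (j : ℝ) • w) x) :=
  ⟨φ x, by rintro _ ⟨j, rfl⟩; linarith [posVal_nonneg (φ := φ - (j : ℝ) • w) hx]⟩

lemma monotone_bandTerms (hw : FunLe 0 w) (hx : 0 ≤ x) :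
    Monotone fun j : ℕ => φ x - posVal (φ - (j : ℝ) • w) x := fun i j hij => by
  have := posVal_sub_anti (φ := φ) (hw.smul_le_smul (fun _ _ => le_rfl) i.cast_nonneg
    (Nat.cast_le.mpr hij)) hx
  dsimp only
  linarith

lemma exists_isBandComponent (hφ : FunLe 0 φ) (hw : FunLe 0 w) : ∃ P, IsBandComponent w φ P := by
  refine exists_clm_eqOn_nonneg _ ‖φ‖ (fun x y hx hy => ?_) fun x hx => ?_
  · simp only [map_add, posVal_add hx hy, add_sub_add_comm]
    exact ciSup_add_of_monotone (monotone_bandTerms hw hx) (bddAbove_bandTerms φ w hx)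
      (monotone_bandTerms hw hy) (bddAbove_bandTerms φ w hy)
  · have h0 : 0 ≤ ⨆ j : ℕ, (φ x - posVal (φ - (j : ℝ) • w) x) :=
      le_ciSup_of_le (bddAbove_bandTerms φ w hx) 0 (by simp [posVal_eq_apply hφ hx])
    rw [abs_of_nonneg h0]
    exact (ciSup_le fun j => by linarith [posVal_nonneg (φ := φ - (j : ℝ) • w) hx]).trans
      (apply_le_norm_mul φ hx le_rfl)

namespace IsBandComponent

lemma sub_posVal_le (hP : IsBandComponent w φ P) (hx : 0 ≤ x) (j : ℕ) :
    φ x - posVal (φ - (j : ℝ) • w) x ≤ P x :=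
  (hP x hx).symm ▸ le_ciSup (bddAbove_bandTerms φ w hx) j

lemma funLe (hP : IsBandComponent w φ P) : FunLe P φ := fun x hx => by
  rw [hP x hx]
  exact ciSup_le fun j => by linarith [posVal_nonneg (φ := φ - (j : ℝ) • w) hx]

lemma nonneg (hP : IsBandComponent w φ P) (hφ : FunLe 0 φ) : FunLe 0 P := fun x hx => by
  simpa [posVal_eq_apply hφ hx] using hP.sub_posVal_le hx 0

lemma mono (hP : IsBandComponent w φ P) (hQ : IsBandComponent w' φ Q) (hw : FunLe 0 w)
    (hww' : FunLe w w') : FunLe P Q := fun x hx => by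
  rw [hP x hx]
  refine ciSup_le fun j => le_trans ?_ (hQ.sub_posVal_le hx j)
  linarith [posVal_sub_anti (φ := φ) (hw.smul_le_smul hww' j.cast_nonneg le_rfl) hx]

lemma funLe_of_dualPosPart (hP : IsBandComponent (dualPosPart (ψ - φ)) φ P)
    (hψ : FunLe 0 ψ) : FunLe P ψ := fun x hx => by
  rw [hP x hx]
  refine ciSup_le fun j => le_of_forall_pos_le_add fun η hη => ?_
  have hη' : 0 < η / (j + 1) := by positivity
  obtain ⟨s, hs, hsx, hws⟩ := exists_lt_of_lt_posVal hx (sub_lt_self (posVal (ψ - φ) x) hη')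
  rw [← dualPosPart_apply _ hx, sub_apply] at hws
  have hw_xs : dualPosPart (ψ - φ) (x - s) < η / (j + 1) := by
    rw [map_sub]
    linarith [le_dualPosPart (ψ - φ) s hs, sub_apply ψ φ s]
  have hsub := le_posVal (φ := φ - (j : ℝ) • dualPosPart (ψ - φ)) (sub_nonneg.mpr hsx)
    (sub_le_self x hs)
  have hjw := mul_le_mul_of_nonneg_left hw_xs.le (j.cast_nonneg : (0 : ℝ) ≤ j)
  simp only [sub_apply, smul_apply, smul_eq_mul] at hsub
  have hη : (j : ℝ) * (η / (j + 1)) + η / (j + 1) = η := by field_simp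
  linarith [hψ.apply_mono hsx, (dualPosPart_nonneg (ψ - φ)).apply_nonneg hx, map_sub φ x s]

lemma exists_le_mul_add (hP : IsBandComponent w φ P) (hx : 0 ≤ x) {η : ℝ} (hη : 0 < η) :
    ∃ j : ℕ, ∀ z, 0 ≤ z → z ≤ x → P z ≤ j * w z + η := by
  obtain ⟨j, hj⟩ : ∃ j : ℕ, P x - η < φ x - posVal (φ - (j : ℝ) • w) x :=
    exists_lt_of_lt_ciSup (by rw [← hP x hx]; linarith)
  have hτ : FunLe 0 (P - φ + dualPosPart (φ - (j : ℝ) • w)) := fun t ht => by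
    simp only [add_apply, sub_apply, zero_apply, dualPosPart_apply _ ht]
    linarith [hP.sub_posVal_le ht j]
  refine ⟨j, fun z hz hzx => ?_⟩
  have hτzx := hτ.apply_mono hzx
  have hNz := le_dualPosPart (φ - (j : ℝ) • w) z hz
  simp only [add_apply, sub_apply, smul_apply, smul_eq_mul, dualPosPart_apply _ hx] at hτzx hNz
  linarith

/-- `z` is a near-maximiser of `(ψ - K • w)⁺` on `[0, x]` for a large `K`. -/
lemma exists_mul_le_and_sub_le (hQ : IsBandComponent w ψ Q) (hx : 0 ≤ x) (j : ℕ) {η : ℝ}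
    (hη : 0 < η) : ∃ z, 0 ≤ z ∧ z ≤ x ∧ j * w z ≤ η ∧ ψ (x - z) - Q (x - z) ≤ η := by
  obtain ⟨K, hK⟩ := exists_nat_gt (j * (‖ψ‖ * ‖x‖ + η) / η)
  rw [div_lt_iff₀ hη] at hK
  obtain ⟨z, hz, hzx, hψz⟩ :=
    exists_lt_of_lt_posVal hx (sub_lt_self (posVal (ψ - (K : ℝ) • w) x) hη)
  simp only [sub_apply, smul_apply, smul_eq_mul] at hψz
  refine ⟨z, hz, hzx, ?_, ?_⟩
  · have hKw : K * w z ≤ ‖ψ‖ * ‖x‖ + η := by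
      linarith [apply_le_norm_mul ψ hz hzx, posVal_nonneg (φ := ψ - (K : ℝ) • w) hx]
    have hj : (0 : ℝ) ≤ j := j.cast_nonneg
    nlinarith [mul_le_mul_of_nonneg_left hKw hj]
  · have hxz : 0 ≤ x - z := sub_nonneg.mpr hzx
    have hsmall : posVal (ψ - (K : ℝ) • w) (x - z) ≤ η := posVal_le hxz fun t ht htxz => by
      have := le_posVal (φ := ψ - (K : ℝ) • w) (add_nonneg hz ht) (le_sub_iff_add_le'.mp htxz)
      simp only [sub_apply, smul_apply, smul_eq_mul, map_add] at this ⊢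
      linarith
    linarith [hQ.sub_posVal_le hxz K]

end IsBandComponent

lemma funDisjoint_of_funLe_isBandComponent (hP : IsBandComponent w φ P)
    (hQ : IsBandComponent w ψ Q) (hu : FunLe 0 u) (huP : FunLe u P) (hv : FunLe 0 v)
    (hvQ : FunLe v (ψ - Q)) : FunDisjoint u v := by
  refine funDisjoint_of_forall_exists hu hv fun x hx η hη => ?_
  obtain ⟨j, hj⟩ := hP.exists_le_mul_add hx (by positivity : 0 < η / 4)
  obtain ⟨z, hz, hzx, hwz, hψQ⟩ := hQ.exists_mul_le_and_sub_le hx j (by positivity : 0 < η / 4)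
  refine ⟨z, hz, hzx, ?_⟩
  have := hvQ _ (sub_nonneg.mpr hzx)
  rw [sub_apply] at this
  linarith [huP z hz, hj z hz hzx]

end BandComponent

lemma posVal_sub_smul_dualPosPart_le {φ ψ f : E →L[ℝ] ℝ} (hf : FunLe 0 f) (hφf : FunLe φ f)
    (hψ : FunLe 0 ψ) {δ : ℝ} {j : ℕ} (hj : 1 ≤ j * δ) {x : E} (hx : 0 ≤ x) :
    posVal (φ - (j : ℝ) • dualPosPart (δ • f - ψ)) x ≤ j * ψ x :=
  posVal_le hx fun t ht htx => by
    have hwt := le_dualPosPart (δ • f - ψ) t ht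
    simp only [sub_apply, smul_apply, smul_eq_mul] at hwt ⊢
    nlinarith [mul_le_mul_of_nonneg_right hj (hf.apply_nonneg ht), hφf t ht, hψ.apply_mono htx,
      (j.cast_nonneg : (0 : ℝ) ≤ j)]

/-- With `w k = (δ • F 0 - F k)⁺` increasing in `k` and `P k i` the component of `F k` in the band
of `w i`, the differences `P k (k + 1) - P k k` are pairwise disjoint; they stay large where
`F (k + 1)` is small because `P k k ≤ δ • F 0`. -/
lemma exists_pairwise_funDisjoint_of_antitone {F : ℕ → E →L[ℝ] ℝ} (hF : ∀ n, FunLe 0 (F n))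
    (hanti : ∀ n, FunLe (F (n + 1)) (F n)) {δ : ℝ} {j : ℕ} (hj : 1 ≤ j * δ) :
    ∃ g : ℕ → E →L[ℝ] ℝ, (∀ n, FunLe 0 (g n) ∧ FunLe (g n) (F n)) ∧
      Pairwise (fun m n => FunDisjoint (g m) (g n)) ∧
      ∀ n x, 0 ≤ x → F n x - j * F (n + 1) x - δ * F 0 x ≤ g n x := by
  have hδ : 0 ≤ δ := by nlinarith [(j.cast_nonneg : (0 : ℝ) ≤ j)]
  set w : ℕ → E →L[ℝ] ℝ := fun n => dualPosPart (δ • F 0 - F n)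
  have hw : ∀ n, FunLe 0 (w n) := fun n => dualPosPart_nonneg _
  have hw_mono : ∀ {m n}, m ≤ n → FunLe (w m) (w n) := fun hmn x hx => by
    simp only [w, dualPosPart_apply _ hx]
    exact posVal_mono hx fun y hy _ => by
      simp only [sub_apply]
      linarith [funLe_of_antitone hanti hmn y hy]
  choose P hP using fun n i => exists_isBandComponent (hF n) (hw i)
  have hg : ∀ n, FunLe 0 (P n (n + 1) - P n n) := fun n =>
    ((hP n n).mono (hP n (n + 1)) (hw n) (hw_mono n.le_succ)).nonneg_sub
  have hg_le : ∀ n m, m < n → FunLe (P n (n + 1) - P n n) (F n - P n (m + 1)) :=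
    fun n m hmn x hx => by
      simp only [sub_apply]
      linarith [(hP n (n + 1)).funLe x hx, (hP n (m + 1)).mono (hP n n) (hw _) (hw_mono hmn) x hx]
  refine ⟨fun n => P n (n + 1) - P n n, fun n => ⟨hg n, fun x hx => ?_⟩, ?_, fun n x hx => ?_⟩
  · simp only [sub_apply]
    linarith [(hP n (n + 1)).funLe x hx, ((hP n n).nonneg (hF n)).apply_nonneg hx]
  · have hlt : ∀ m n, m < n → FunDisjoint (P m (m + 1) - P m m) (P n (n + 1) - P n n) :=
      fun m n hmn => funDisjoint_of_funLe_isBandComponent (hP m (m + 1)) (hP n (m + 1)) (hg m)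
        (fun x hx => by simp only [sub_apply]; linarith [((hP m m).nonneg (hF m)).apply_nonneg hx])
        (hg n) (hg_le n m hmn)
    intro m n hmn
    rcases lt_or_gt_of_ne hmn with h | h
    exacts [hlt m n h, (hlt n m h).symm]
  · have hsmall := (hP n n).funLe_of_dualPosPart (fun y hy => by
      simpa using mul_nonneg hδ ((hF 0).apply_nonneg hy)) x hx
    simp only [sub_apply, smul_apply, smul_eq_mul] at hsmall ⊢
    linarith [(hP n (n + 1)).sub_posVal_le hx j, posVal_sub_smul_dualPosPart_le (hF 0)
      (funLe_of_antitone hanti n.zero_le) (hF (n + 1)) hj hx]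

lemma exists_pairwise_funDisjoint_of_le_norm {A : Set (E →L[ℝ] ℝ)}
    (hdir : ∀ f ∈ A, ∀ g ∈ A, ∃ h ∈ A, FunLe h f ∧ FunLe h g) (hpos : ∀ f ∈ A, FunLe 0 f)
    (hglb : ∀ g, (∀ f ∈ A, FunLe g f) → FunLe g 0) {f₀ : E →L[ℝ] ℝ} (hf₀ : f₀ ∈ A) {ε : ℝ}
    (hε : 0 < ε) (hlarge : ∀ f ∈ A, ε ≤ ‖f‖) :
    ∃ g : ℕ → E →L[ℝ] ℝ, (∀ n, g n ∈ DualSolidHull {f₀}) ∧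
      Pairwise (fun m n => FunDisjoint (g m) (g n)) ∧ ∀ n, ε / 4 < ‖g n‖ := by
  set δ := ε / (8 * (‖f₀‖ + 1))
  have hδ : 0 < δ := by positivity
  set j := ⌈δ⁻¹⌉₊
  obtain ⟨F, X, rfl, hFA, hanti, hX, hFX⟩ := exists_antitone_seq hf₀ (c := ε / 2)
    (η := ε / (8 * (j + 1)))
    (fun f hf x hx => exists_funLe_apply_lt hdir hpos hglb hf hx (by positivity))
    (fun f hf => exists_nonneg_norm_le_one_lt_apply (hpos f hf) (by linarith [hlarge f hf]))
  obtain ⟨g, hg, hdisj, hgX⟩ := exists_pairwise_funDisjoint_of_antitone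
    (fun n => hpos _ (hFA n)) hanti (δ := δ) (j := j)
    (by simpa [inv_mul_cancel₀ hδ.ne'] using mul_le_mul_of_nonneg_right (Nat.le_ceil δ⁻¹) hδ.le)
  refine ⟨g, fun n => mem_dualSolidHull_singleton (hpos _ (hFA 0)) (hg n).1
    ((hg n).2.trans (funLe_of_antitone hanti n.zero_le)), hdisj, fun n => ?_⟩
  have hjF : (j : ℝ) * F (n + 1) (X n) ≤ ε / 8 :=
    calc (j : ℝ) * F (n + 1) (X n) ≤ j * (ε / (8 * (j + 1))) := by gcongr; exact (hFX n).le
      _ ≤ ε / 8 := by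
        rw [mul_div_assoc', div_le_div_iff₀ (by positivity) (by positivity)]
        nlinarith
  have hδF : δ * F 0 (X n) ≤ ε / 8 :=
    calc δ * F 0 (X n) ≤ δ * (‖F 0‖ + 1) := by
          gcongr
          linarith [apply_le_norm_of_norm_le_one (F 0) (hX n).2.1]
      _ = ε / 8 := by simp only [δ]; field_simp
  linarith [hgX n (X n) (hX n).1, (hX n).2.2, apply_le_norm_of_norm_le_one (g n) (hX n).2.1]

end DualOrderContinuity

theorem stmt9_general {E : Type*} [NormedAddCommGroup E] [Lattice E] [HasSolidNorm E] [IsOrderedAddMonoid E] [NormedSpace ℝ E]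
    (h : ∀ B : Set (E →L[ℝ] ℝ), AlmostLSet B → DualLWeaklyCompact B) :
    DualOrderContinuousNorm E := by
  intro A ⟨f₀, hf₀⟩ hdir hpos hglb ε hε
  by_contra! hlarge
  obtain ⟨g, hg, hdisj, hnorm⟩ :=
    exists_pairwise_funDisjoint_of_le_norm hdir hpos hglb hf₀ hε hlarge
  have hnull := (h _ (almostLSet_singleton f₀)).2 g hg hdisj
  obtain ⟨n, hn⟩ := (hnull.eventually (gt_mem_nhds (by positivity : 0 < ε / 4))).exists
  linarith [hnorm n]

/-- If every almost L-set in `E*` is L-weakly compact, then the norm of `E*` is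
order continuous. -/
theorem stmt9 {E : Type*} [NormedAddCommGroup E] [Lattice E] [HasSolidNorm E] [IsOrderedAddMonoid E] [NormedSpace ℝ E] [CompleteSpace E]
    (h : ∀ B : Set (E →L[ℝ] ℝ), AlmostLSet B → DualLWeaklyCompact B) :
    DualOrderContinuousNorm E :=
  stmt9_general h
end
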